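/- arXiv:1907.13603 — 8 statements merged into one kernel-verified Lean document; each statement's English description precedes it below -/
import Mathlib

section
/- If a family {s_1, …, s_r} of sign vectors in {−1,1}^n is Schur independent, then the vectors s_1, …, s_r are linearly independent in ℝ^n. -/
open Matrix

noncomputable section

/-- A sign vector: every entry is `1` or `-1`. -/
def IsSignVec {n : ℕ} (s : Fin n → ℝ) : Prop := ∀ k, s k = 1 ∨ s k = -1

/-- Schur independence of a family of vectors: the all-ones vector together with the
entrywise (Schur) products `s i ⊙ s j` for `i < j` form a linearly independent family. -/
def SchurIndependent {n r : ℕ} (s : Fin r → Fin n → ℝ) : Prop :=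
  LinearIndependent ℝ (fun p : Option {q : Fin r × Fin r // q.1 < q.2} =>
    p.elim (fun _ : Fin n => (1 : ℝ)) (fun q k => s q.1.1 k * s q.1.2 k))

/-!
If `∑ i, c i • s i = 0`, multiplying entrywise by the sign vector `s j` gives
`c j • 𝟙 = -∑_{i ≠ j} c i • (s i ⊙ s j)`, so `c j • 𝟙` lies in the span of the Schur products.
Schur independence puts `𝟙` outside that span, hence `c j = 0`.
-/

open Submodule Finset

theorem smul_one_mem_span_mul_of_sum_smul_eq_zero {R A ι : Type*} [CommRing R] [CommRing A]
    [Algebra R A] [Fintype ι] [DecidableEq ι] {s : ι → A} {c : ι → R}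
    (hc : ∑ i, c i • s i = 0) {j : ι} (hj : s j * s j = 1) :
    c j • (1 : A) ∈ span R ((fun i => s i * s j) '' {j}ᶜ) := by
  have hsum : c j • (1 : A) + ∑ i ∈ univ.erase j, c i • (s i * s j) = 0 := by
    rw [← hj, Finset.add_sum_erase _ (fun i => c i • (s i * s j)) (mem_univ j)]
    simp only [← smul_mul_assoc, ← Finset.sum_mul, hc, zero_mul]
  rw [eq_neg_of_add_eq_zero_left hsum]
  refine neg_mem (sum_mem fun i hi => smul_mem _ _ (subset_span ⟨i, ?_, rfl⟩))
  simpa using ne_of_mem_erase hi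

theorem IsSignVec.mul_self {n : ℕ} {t : Fin n → ℝ} (ht : IsSignVec t) : t * t = 1 := by
  funext k
  rcases ht k with h | h <;> simp [h]

section SchurProducts

variable {n r : ℕ} {s : Fin r → Fin n → ℝ}

def schurProducts (s : Fin r → Fin n → ℝ) : {q : Fin r × Fin r // q.1 < q.2} → Fin n → ℝ :=
  fun q => s q.1.1 * s q.1.2

theorem image_mul_compl_subset_range_schurProducts (j : Fin r) :
    (fun i => s i * s j) '' {j}ᶜ ⊆ Set.range (schurProducts s) := by
  rintro _ ⟨i, hij, rfl⟩
  rcases Ne.lt_or_gt hij with h | h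
  · exact ⟨⟨(i, j), h⟩, rfl⟩
  · exact ⟨⟨(j, i), h⟩, mul_comm _ _⟩

theorem SchurIndependent.one_notMem_span (h : SchurIndependent s) :
    (1 : Fin n → ℝ) ∉ span ℝ (Set.range (schurProducts s)) :=
  (linearIndependent_option.1 h).2

end SchurProducts

/-- a Schur independent family of sign vectors is linearly independent. -/
theorem schurIndependent_linearIndependent {n r : ℕ}
    (s : Fin r → Fin n → ℝ) (hs : ∀ i, IsSignVec (s i))
    (h : SchurIndependent s) :
    LinearIndependent ℝ s := by
  refine Fintype.linearIndependent_iff.2 fun c hc j => by_contra fun hcj => h.one_notMem_span ?_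
  have hspan : c j • (1 : Fin n → ℝ) ∈ span ℝ (Set.range (schurProducts s)) :=
    span_mono (image_mul_compl_subset_range_schurProducts j)
      (smul_one_mem_span_mul_of_sum_smul_eq_zero hc (hs j).mul_self)
  simpa [hcj] using smul_mem _ (c j)⁻¹ hspan
end
end

section
/- Let S = {s_1, …, s_r} ⊆ {−1,1}^n be a set of sign vectors such that F = conv{ss^T : s ∈ S} is a simplicial face of the elliptope E_n. If A belongs to the relative interior of F, then A admits a unique representation as a proper convex combination of rank-one sign matrices; that is, there is exactly one finitely supported function w from {−1,1}^n-generated rank-one matrices ss^T to the nonnegative reals, positive on its support, with total sum 1, such that A = Σ w(ss^T)·ss^T. -/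
open Matrix

noncomputable section

/-- The elliptope: positive-semidefinite matrices with unit diagonal (correlation matrices). -/
def elliptope (n : ℕ) : Set (Matrix (Fin n) (Fin n) ℝ) :=
  {A | A.PosSemidef ∧ ∀ i, A i i = 1}

/-- A face of a convex set `K`: a convex subset `F ⊆ K` such that whenever a point of `F`
is a proper convex combination of two points of `K`, both points lie in `F`. -/
def IsFace {V : Type*} [AddCommGroup V] [Module ℝ V] (K F : Set V) : Prop :=
  F ⊆ K ∧ Convex ℝ F ∧
    ∀ x ∈ K, ∀ y ∈ K, ∀ τ : ℝ, 0 < τ → τ < 1 → τ • x + (1 - τ) • y ∈ F → x ∈ F ∧ y ∈ F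

/-- A simplicial face: a face that is the convex hull of a finite affinely independent set. -/
def IsSimplicialFace {V : Type*} [AddCommGroup V] [Module ℝ V] (K F : Set V) : Prop :=
  IsFace K F ∧ ∃ t : Finset V,
    AffineIndependent ℝ (Subtype.val : {x : V // x ∈ t} → V) ∧ F = convexHull ℝ (t : Set V)

namespace SCDaux

variable {n : ℕ}

lemma sign_mem_elliptope {v : Fin n → ℝ} (hv : IsSignVec v) :
    vecMulVec v v ∈ elliptope n := by
  refine ⟨Matrix.posSemidef_iff_dotProduct_mulVec.mpr ⟨?_, ?_⟩, ?_⟩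
  · ext i j
    simp [Matrix.conjTranspose_apply, Matrix.vecMulVec_apply, mul_comm]
  · intro x
    have hmv : (vecMulVec v v) *ᵥ x = fun k => v k * (v ⬝ᵥ x) := by
      funext k
      simp [Matrix.mulVec, dotProduct, Matrix.vecMulVec_apply, Finset.mul_sum, mul_assoc]
    have hdot : star x ⬝ᵥ (fun k => v k * (v ⬝ᵥ x)) = (v ⬝ᵥ x) * (v ⬝ᵥ x) := by
      simp only [star_trivial, dotProduct]
      rw [Finset.sum_mul]
      exact Finset.sum_congr rfl fun k _ => by ring
    rw [hmv, hdot]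
    exact mul_self_nonneg _
  · intro i
    rcases hv i with h | h <;> simp [Matrix.vecMulVec_apply, h]

lemma entry_bound {X : Matrix (Fin n) (Fin n) ℝ} (hX : X ∈ elliptope n) (i j : Fin n) :
    -1 ≤ X i j ∧ X i j ≤ 1 := by
  have hsym : X j i = X i j := by
    have h := congrFun (congrFun hX.1.1 i) j
    simpa [Matrix.conjTranspose_apply] using h
  have key : ∀ c : ℝ, 0 ≤ X i i + c * X i j + c * X j i + c * c * X j j := by
    intro c
    set u : Fin n → ℝ := (Pi.single i (1:ℝ) : Fin n → ℝ) + c • (Pi.single j (1:ℝ) : Fin n → ℝ) with hu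
    have h := hX.1.dotProduct_mulVec_nonneg u
    have h2 : star u ⬝ᵥ X *ᵥ u =
        X i i + c * X i j + c * X j i + c * c * X j j := by
      rw [hu]
      simp [Matrix.mulVec_add, Matrix.mulVec_smul, Matrix.mulVec_single, dotProduct_add,
        add_dotProduct, smul_dotProduct, dotProduct_smul, single_dotProduct, smul_eq_mul]
      ring
    rw [h2] at h
    exact h
  rcases eq_or_ne i j with rfl | hij
  · rw [hX.2 i]; norm_num
  · have h1 := key 1
    have h2 := key (-1)
    rw [hX.2 i, hX.2 j, hsym] at h1 h2
    constructor <;> nlinarith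

lemma sign_extreme_aux {v : Fin n → ℝ} (hv : IsSignVec v)
    {X Y : Matrix (Fin n) (Fin n) ℝ} (hX : X ∈ elliptope n) (hY : Y ∈ elliptope n)
    {a b : ℝ} (ha : 0 < a) (hb : 0 < b) (hab : a + b = 1)
    (heq : a • X + b • Y = vecMulVec v v) : X = vecMulVec v v := by
  ext i j
  obtain ⟨hX1, hX2⟩ := entry_bound hX i j
  obtain ⟨hY1, hY2⟩ := entry_bound hY i j
  have heqij : a * X i j + b * Y i j = v i * v j := by
    have h := congrFun (congrFun heq i) j
    simpa [Matrix.vecMulVec_apply, Matrix.add_apply, Matrix.smul_apply, smul_eq_mul] using h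
  rw [Matrix.vecMulVec_apply]
  rcases hv i with hi | hi <;> rcases hv j with hj | hj <;> rw [hi, hj] at heqij ⊢ <;>
    norm_num at heqij ⊢
  · nlinarith
  · nlinarith
  · nlinarith
  · nlinarith

lemma elliptope_convex : Convex ℝ (elliptope n) := by
  rintro X ⟨⟨hXh, hXq⟩, hXd⟩ Y ⟨⟨hYh, hYq⟩, hYd⟩ a b ha hb hab
  refine ⟨Matrix.posSemidef_iff_dotProduct_mulVec.mpr ⟨?_, ?_⟩, ?_⟩
  · ext i j
    have h1 := congrFun (congrFun hXh i) j
    have h2 := congrFun (congrFun hYh i) j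
    simp only [Matrix.conjTranspose_apply, Matrix.add_apply, Matrix.smul_apply] at *
    simp only [star_trivial] at *
    rw [h1, h2]
  · intro x
    have : (a • X + b • Y) *ᵥ x = a • (X *ᵥ x) + b • (Y *ᵥ x) := by
      rw [Matrix.add_mulVec, Matrix.smul_mulVec, Matrix.smul_mulVec]
    rw [this, dotProduct_add, dotProduct_smul, dotProduct_smul]
    have := (Matrix.posSemidef_iff_dotProduct_mulVec.mp ⟨hXh, hXq⟩).2 x; have := (Matrix.posSemidef_iff_dotProduct_mulVec.mp ⟨hYh, hYq⟩).2 x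
    positivity
  · intro i
    simp [Matrix.add_apply, Matrix.smul_apply, hXd i, hYd i, smul_eq_mul, hab]

lemma face_sum_mem {V : Type*} [AddCommGroup V] [Module ℝ V] {K F : Set V}
    (hK : Convex ℝ K) (hf : IsFace K F) {ι : Type*} (q : Finset ι) (w : ι → ℝ) (p : ι → V)
    (hpos : ∀ i ∈ q, 0 < w i) (hsum : ∑ i ∈ q, w i = 1)
    (hmem : ∀ i ∈ q, p i ∈ K) (hin : (∑ i ∈ q, w i • p i) ∈ F) :
    ∀ i ∈ q, p i ∈ F := by
  classical
  induction q using Finset.induction_on generalizing w with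
  | empty => intro i hi; exact absurd hi (Finset.notMem_empty i)
  | insert _ _ hnm ih =>
    rename_i i0 q'
    rw [Finset.sum_insert hnm] at hsum hin
    rcases Finset.eq_empty_or_nonempty q' with rfl | hne
    · simp only [Finset.sum_empty, add_zero] at hsum hin
      rw [hsum, one_smul] at hin
      intro i hi
      rcases Finset.mem_insert.1 hi with rfl | h
      · exact hin
      · exact absurd h (Finset.notMem_empty i)
    · have hc : 0 < ∑ j ∈ q', w j :=
        Finset.sum_pos (fun j hj => hpos j (Finset.mem_insert_of_mem hj)) hne
      set c := ∑ j ∈ q', w j with hcdef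
      have hw0 : 0 < w i0 := hpos i0 (Finset.mem_insert_self _ _)
      have hw1 : w i0 < 1 := by linarith
      set y : V := ∑ j ∈ q', (c⁻¹ * w j) • p j with hy
      have hyK : y ∈ K := by
        apply hK.sum_mem
        · intro j hj
          exact le_of_lt (mul_pos (inv_pos.2 hc) (hpos j (Finset.mem_insert_of_mem hj)))
        · rw [← Finset.mul_sum, inv_mul_cancel₀ (ne_of_gt hc)]
        · intro j hj; exact hmem j (Finset.mem_insert_of_mem hj)
      have hrw : (1 - w i0) • y = ∑ j ∈ q', w j • p j := by
        have : (1 - w i0) = c := by linarith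
        rw [this, hy, Finset.smul_sum]
        apply Finset.sum_congr rfl
        intro j hj
        rw [smul_smul, ← mul_assoc, mul_inv_cancel₀ (ne_of_gt hc), one_mul]
      have hface := hf.2.2 (p i0) (hmem i0 (Finset.mem_insert_self _ _)) y hyK (w i0) hw0 hw1
        (by rw [hrw]; exact hin)
      have hrest := ih (fun j => c⁻¹ * w j)
        (fun j hj => by have := hpos j (Finset.mem_insert_of_mem hj); positivity)
        (by rw [← Finset.mul_sum, inv_mul_cancel₀ (ne_of_gt hc)])
        (fun j hj => hmem j (Finset.mem_insert_of_mem hj))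
        (hface.2)
      intro i hi
      rcases Finset.mem_insert.1 hi with rfl | h
      · exact hface.1
      · exact hrest i h

end SCDaux

/-- if `conv{s sᵀ : s ∈ S}` is a simplicial face of the elliptope and `A` lies in
its relative interior, then `A` has a unique representation as a proper convex combination of
rank-one sign matrices. -/
theorem unique_scd_of_mem_relint_simplicialFace {n r : ℕ}
    (s : Fin r → Fin n → ℝ) (hs : ∀ i, IsSignVec (s i))
    (F : Set (Matrix (Fin n) (Fin n) ℝ))
    (hF : F = convexHull ℝ {M | ∃ i, M = vecMulVec (s i) (s i)})
    (hface : IsSimplicialFace (elliptope n) F)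
    (A : Matrix (Fin n) (Fin n) ℝ) (hA : A ∈ intrinsicInterior ℝ F) :
    ∃! w : Matrix (Fin n) (Fin n) ℝ →₀ ℝ,
      (∀ p, 0 ≤ w p) ∧
      (↑w.support ⊆ {M : Matrix (Fin n) (Fin n) ℝ |
          ∃ v : Fin n → ℝ, IsSignVec v ∧ M = vecMulVec v v}) ∧
      (w.sum fun _ c => c) = 1 ∧ (w.sum fun p c => c • p) = A := by
  classical
  obtain ⟨hfaceF, t, hindep, htF⟩ := hface
  have hAF : A ∈ F := intrinsicInterior_subset hA
  -- every support point of a good representation lies in t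
  have hGoodSupp : ∀ w : Matrix (Fin n) (Fin n) ℝ →₀ ℝ,
      (∀ p, 0 ≤ w p) →
      (↑w.support ⊆ {M : Matrix (Fin n) (Fin n) ℝ |
          ∃ v : Fin n → ℝ, IsSignVec v ∧ M = vecMulVec v v}) →
      (w.sum fun _ c => c) = 1 →
      (w.sum fun p c => c • p) = A → w.support ⊆ t := by
    intro w hpos hsupp hsum hrep M hM
    have hsuppK : ∀ p ∈ w.support, (id p : Matrix (Fin n) (Fin n) ℝ) ∈ elliptope n := by
      intro p hp
      obtain ⟨v, hv, rfl⟩ := hsupp hp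
      exact SCDaux.sign_mem_elliptope hv
    have hMF : M ∈ F := by
      refine SCDaux.face_sum_mem SCDaux.elliptope_convex hfaceF w.support ⇑w id
        ?_ hsum hsuppK ?_ M hM
      · intro p hp
        exact lt_of_le_of_ne (hpos p) (Ne.symm (Finsupp.mem_support_iff.1 hp))
      · show (∑ i ∈ w.support, w i • id i) ∈ F
        have hA' : (w.sum fun p c => c • p) ∈ F := by rw [hrep]; exact hAF
        exact hA'
    obtain ⟨v, hv, rfl⟩ := hsupp hM
    have hext : vecMulVec v v ∈ Set.extremePoints ℝ (convexHull ℝ (t : Set _)) := by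
      rw [mem_extremePoints]
      refine ⟨htF ▸ hMF, ?_⟩
      intro x1 hx1 x2 hx2 hseg
      have hx1K : x1 ∈ elliptope n := hfaceF.1 (htF ▸ hx1)
      have hx2K : x2 ∈ elliptope n := hfaceF.1 (htF ▸ hx2)
      obtain ⟨a, b, ha, hb, hab, habe⟩ := hseg
      refine ⟨SCDaux.sign_extreme_aux hv hx1K hx2K ha hb hab habe, ?_⟩
      refine SCDaux.sign_extreme_aux hv hx2K hx1K hb ha (by linarith) ?_
      rw [add_comm]; exact habe
    exact extremePoints_convexHull_subset hext
  -- uniqueness of good representations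
  have hUniq : ∀ w₁ w₂ : Matrix (Fin n) (Fin n) ℝ →₀ ℝ,
      ((∀ p, 0 ≤ w₁ p) ∧
        (↑w₁.support ⊆ {M : Matrix (Fin n) (Fin n) ℝ |
            ∃ v : Fin n → ℝ, IsSignVec v ∧ M = vecMulVec v v}) ∧
        (w₁.sum fun _ c => c) = 1 ∧ (w₁.sum fun p c => c • p) = A) →
      ((∀ p, 0 ≤ w₂ p) ∧
        (↑w₂.support ⊆ {M : Matrix (Fin n) (Fin n) ℝ |
            ∃ v : Fin n → ℝ, IsSignVec v ∧ M = vecMulVec v v}) ∧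
        (w₂.sum fun _ c => c) = 1 ∧ (w₂.sum fun p c => c • p) = A) →
      w₁ = w₂ := by
    intro w₁ w₂ ⟨h1p, h1s, h1sum, h1rep⟩ ⟨h2p, h2s, h2sum, h2rep⟩
    have hs1 : w₁.support ⊆ t := hGoodSupp w₁ h1p h1s h1sum h1rep
    have hs2 : w₂.support ⊆ t := hGoodSupp w₂ h2p h2s h2sum h2rep
    have sum1 : ∑ M ∈ t, w₁ M = 1 := by
      rw [← Finsupp.sum_of_support_subset w₁ hs1 (fun _ c => c) (fun _ _ => rfl)]; exact h1sum
    have sum2 : ∑ M ∈ t, w₂ M = 1 := by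
      rw [← Finsupp.sum_of_support_subset w₂ hs2 (fun _ c => c) (fun _ _ => rfl)]; exact h2sum
    have rep1 : ∑ M ∈ t, w₁ M • M = A := by
      rw [← Finsupp.sum_of_support_subset w₁ hs1 (fun p c => c • p)
        (fun p _ => zero_smul ℝ p)]; exact h1rep
    have rep2 : ∑ M ∈ t, w₂ M • M = A := by
      rw [← Finsupp.sum_of_support_subset w₂ hs2 (fun p c => c • p)
        (fun p _ => zero_smul ℝ p)]; exact h2rep
    have h0 : ∑ x : {x // x ∈ t}, (w₁ x.1 - w₂ x.1) = 0 := by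
      rw [Finset.univ_eq_attach, Finset.sum_sub_distrib, Finset.sum_attach t (fun M => w₁ M),
        Finset.sum_attach t (fun M => w₂ M), sum1, sum2, sub_self]
    have hv0 : Finset.univ.weightedVSub (Subtype.val : {x // x ∈ t} → _)
        (fun x => w₁ x.1 - w₂ x.1) = 0 := by
      rw [Finset.weightedVSub_eq_linear_combination _ h0]
      rw [Finset.univ_eq_attach]
      have : ∑ x ∈ t.attach, (w₁ x.1 - w₂ x.1) • (x.1 : Matrix (Fin n) (Fin n) ℝ)
          = ∑ M ∈ t, (w₁ M - w₂ M) • M := Finset.sum_attach t (fun M => (w₁ M - w₂ M) • M)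
      rw [this]
      have : ∑ M ∈ t, (w₁ M - w₂ M) • M
          = ∑ M ∈ t, w₁ M • M - ∑ M ∈ t, w₂ M • M := by
        rw [← Finset.sum_sub_distrib]
        exact Finset.sum_congr rfl fun M _ => sub_smul _ _ _
      rw [this, rep1, rep2, sub_self]
    have hzero := hindep Finset.univ (fun x => w₁ x.1 - w₂ x.1) h0 hv0
    ext M
    by_cases hM : M ∈ t
    · have := hzero ⟨M, hM⟩ (Finset.mem_univ _)
      simpa [sub_eq_zero] using this
    · rw [Finsupp.notMem_support_iff.1 (fun h => hM (hs1 h)),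
        Finsupp.notMem_support_iff.1 (fun h => hM (hs2 h))]
  -- existence
  obtain ⟨W, hW⟩ : ∃ w : Matrix (Fin n) (Fin n) ℝ →₀ ℝ,
      (∀ p, 0 ≤ w p) ∧
      (↑w.support ⊆ {M : Matrix (Fin n) (Fin n) ℝ |
          ∃ v : Fin n → ℝ, IsSignVec v ∧ M = vecMulVec v v}) ∧
      (w.sum fun _ c => c) = 1 ∧ (w.sum fun p c => c • p) = A := by
    have hAS : A ∈ convexHull ℝ {M | ∃ i, M = vecMulVec (s i) (s i)} := hF ▸ hAF
    rw [_root_.convexHull_eq] at hAS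
    obtain ⟨ι, q, wgt, z, hw0, hw1, hzS, hcm⟩ := hAS
    rw [Finset.centerMass_eq_of_sum_1 _ _ hw1] at hcm
    refine ⟨∑ i ∈ q, Finsupp.single (z i) (wgt i), ?_, ?_, ?_, ?_⟩
    · intro p
      rw [Finsupp.finset_sum_apply]
      refine Finset.sum_nonneg fun i hi => ?_
      rw [Finsupp.single_apply]
      split
      · exact hw0 i hi
      · exact le_refl 0
    · intro M hM
      rw [Finset.mem_coe] at hM
      obtain ⟨i, hi, hMi⟩ := Finsupp.mem_support_finset_sum M hM
      have hMz : M = z i := by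
        have := Finsupp.support_single_subset hMi
        simpa using this
      obtain ⟨j, hj⟩ := hzS i hi
      exact ⟨s j, hs j, hMz ▸ hj⟩
    · rw [← Finsupp.sum_finset_sum_index (fun _ => rfl) (fun _ _ _ => rfl)]
      rw [Finset.sum_congr rfl fun i _ => Finsupp.sum_single_index rfl]
      exact hw1
    · rw [← Finsupp.sum_finset_sum_index (fun p => zero_smul ℝ p)
        (fun p c₁ c₂ => add_smul c₁ c₂ p)]
      rw [Finset.sum_congr rfl fun i _ => Finsupp.sum_single_index (zero_smul ℝ (z i))]
      exact hcm
  exact ⟨W, hW, fun y hy => hUniq y W hy hW⟩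
end
end

section
/- Let S = {s_1, …, s_r} ⊆ {−1,1}^n be a Schur independent family of sign vectors, let P be the orthogonal projector onto the linear span of S, and define the linear functional ψ(X) = n^{−1}·trace(PX) on symmetric n×n matrices. Then ψ(X) ≤ 1 for every X in the elliptope E_n, and {X ∈ E_n : ψ(X) = 1} = conv{ss^T : s ∈ S}. Consequently ψ exposes the face conv{ss^T : s ∈ S} of E_n. -/
open Matrix

noncomputable section

section Aux

variable {n r : ℕ}

lemma aux_mulVec_ext {A B : Matrix (Fin n) (Fin n) ℝ}
    (h : ∀ v, A.mulVec v = B.mulVec v) : A = B := by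
  ext i j
  have := congrFun (h (Pi.single j 1)) i
  simpa [Matrix.mulVec_single] using this

lemma aux_trace_mul_transpose_nonneg (M : Matrix (Fin n) (Fin n) ℝ) :
    0 ≤ (M * Mᵀ).trace := by
  rw [Matrix.trace]
  refine Finset.sum_nonneg fun i _ => ?_
  simp only [Matrix.diag_apply, Matrix.mul_apply, Matrix.transpose_apply]
  exact Finset.sum_nonneg fun j _ => mul_self_nonneg _

lemma aux_eq_zero_of_trace (M : Matrix (Fin n) (Fin n) ℝ)
    (h : (M * Mᵀ).trace = 0) : M = 0 := by
  have h0 : (M * Mᵀ).trace = ∑ i, ∑ j, M i j * M i j := by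
    simp [Matrix.trace, Matrix.diag, Matrix.mul_apply, Matrix.transpose_apply]
  rw [h0] at h
  have h1 := (Finset.sum_eq_zero_iff_of_nonneg
    (fun i _ => Finset.sum_nonneg fun j _ => mul_self_nonneg (M i j))).mp h
  ext i j
  have h2 := (Finset.sum_eq_zero_iff_of_nonneg
    (fun j _ => mul_self_nonneg (M i j))).mp (h1 i (Finset.mem_univ i)) j (Finset.mem_univ j)
  simpa using mul_self_eq_zero.mp h2

lemma aux_trace_Q_psd {Q X : Matrix (Fin n) (Fin n) ℝ} (hQt : Qᵀ = Q) (hQQ : Q * Q = Q)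
    (hX : X.PosSemidef) :
    0 ≤ (Q * X).trace ∧ ((Q * X).trace = 0 → Q * X = 0) := by
  set R := (open scoped MatrixOrder in CFC.sqrt X) with hR
  have hRt : Rᵀ = R := by
    have h1 := (open scoped MatrixOrder in (CFC.sqrt_nonneg X).posSemidef.1)
    rwa [Matrix.IsHermitian, Matrix.conjTranspose_eq_transpose_of_trivial] at h1
  have hRR : R * R = X := (open scoped MatrixOrder in CFC.sqrt_mul_sqrt_self X hX.nonneg)
  have hQRt : (Q * R)ᵀ = R * Q := by rw [Matrix.transpose_mul, hRt, hQt]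
  have key : (Q * X).trace = ((Q * R) * (Q * R)ᵀ).trace := by
    rw [hQRt]
    have e1 : (Q * R) * (R * Q) = (Q * X) * Q := by
      rw [← hRR]; simp only [Matrix.mul_assoc]
    rw [e1, Matrix.trace_mul_comm (Q * X) Q, ← Matrix.mul_assoc, hQQ]
  constructor
  · rw [key]; exact aux_trace_mul_transpose_nonneg _
  · intro h
    rw [key] at h
    have hQR : Q * R = 0 := aux_eq_zero_of_trace _ h
    calc Q * X = (Q * R) * R := by rw [Matrix.mul_assoc, hRR]
    _ = 0 := by rw [hQR, Matrix.zero_mul]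

lemma aux_double_sum_split (f : Fin r → Fin r → ℝ) (hf : ∀ u v, f u v = f v u) :
    ∑ u, ∑ v, f u v = (∑ u, f u u) + ∑ u, ∑ v, (if u < v then 2 * f u v else 0) := by
  have e : ∀ u v : Fin r, f u v =
      (if u < v then f u v else 0) + (if u = v then f u v else 0)
        + (if v < u then f u v else 0) := by
    intro u v
    rcases lt_trichotomy u v with h | h | h
    · simp [h, h.ne, not_lt_of_gt h]
    · simp [h, lt_irrefl]
    · simp [h, (h.ne).symm, not_lt_of_gt h, h.ne']
  have split : ∑ u, ∑ v, f u v =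
      (∑ u, ∑ v, (if u < v then f u v else 0)) + (∑ u, ∑ v, (if u = v then f u v else 0))
        + (∑ u, ∑ v, (if v < u then f u v else 0)) := by
    rw [← Finset.sum_add_distrib, ← Finset.sum_add_distrib]
    refine Finset.sum_congr rfl fun u _ => ?_
    rw [← Finset.sum_add_distrib, ← Finset.sum_add_distrib]
    exact Finset.sum_congr rfl fun v _ => e u v
  have ediag : ∑ u, ∑ v, (if u = v then f u v else 0) = ∑ u, f u u := by
    refine Finset.sum_congr rfl fun u _ => ?_
    simp
  have egt : ∑ u, ∑ v, (if v < u then f u v else 0)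
      = ∑ u, ∑ v, (if u < v then f u v else 0) := by
    rw [Finset.sum_comm]
    refine Finset.sum_congr rfl fun u _ => Finset.sum_congr rfl fun v _ => ?_
    by_cases h : u < v <;> simp [h, hf u v]
  have etwo : ∑ u, ∑ v, (if u < v then 2 * f u v else 0)
      = ∑ u, ∑ v, ((if u < v then f u v else 0) + (if u < v then f u v else 0)) := by
    refine Finset.sum_congr rfl fun u _ => Finset.sum_congr rfl fun v _ => ?_
    by_cases h : u < v <;> simp [h] <;> ring
  rw [split, ediag, egt, etwo]
  simp only [Finset.sum_add_distrib]
  ring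

lemma aux_sum_subtype_lt (F : Fin r → Fin r → ℝ) :
    ∑ q : {q : Fin r × Fin r // q.1 < q.2}, F q.1.1 q.1.2
      = ∑ u, ∑ v, if u < v then F u v else 0 := by
  have h1 : ∑ u, ∑ v, (if u < v then F u v else 0)
      = ∑ p : Fin r × Fin r, (if p.1 < p.2 then F p.1 p.2 else 0) := by
    rw [Fintype.sum_prod_type]
  have h2 : ∑ p : Fin r × Fin r, (if p.1 < p.2 then F p.1 p.2 else 0)
      = ∑ p ∈ Finset.univ.filter (fun p : Fin r × Fin r => p.1 < p.2), F p.1 p.2 := by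
    rw [Finset.sum_filter]
  have h3 : ∑ p ∈ Finset.univ.filter (fun p : Fin r × Fin r => p.1 < p.2), F p.1 p.2
      = ∑ q : {q : Fin r × Fin r // q.1 < q.2}, F q.1.1 q.1.2 := by
    exact Finset.sum_subtype _ (by simp) _
  rw [h1, h2, h3]

end Aux

lemma aux_sign_sq {s : Fin n → ℝ} (hs : IsSignVec s) (k : Fin n) : s k * s k = 1 := by
  rcases hs k with h | h <;> rw [h] <;> norm_num

lemma aux_schur_extract {s : Fin r → Fin n → ℝ} (hs : ∀ i, IsSignVec (s i))
    (hschur : SchurIndependent s) (d : Fin r → Fin r → ℝ) (hd : ∀ u v, d u v = d v u)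
    (h1 : ∀ k, ∑ u, ∑ v, d u v * (s u k * s v k) = 1) :
    (∀ u v, u ≠ v → d u v = 0) ∧ ∑ u, d u u = 1 := by
  have hli := Fintype.linearIndependent_iff.mp hschur
  set g : Option {q : Fin r × Fin r // q.1 < q.2} → ℝ :=
    fun p => p.elim ((∑ u, d u u) - 1) (fun q => 2 * d q.1.1 q.1.2) with hg
  have hsum : ∑ p, g p • (fun p : Option {q : Fin r × Fin r // q.1 < q.2} =>
      p.elim (fun _ : Fin n => (1 : ℝ)) (fun q k => s q.1.1 k * s q.1.2 k)) p = 0 := by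
    funext k
    rw [Finset.sum_apply]
    rw [Fintype.sum_option]
    simp only [hg, Option.elim, Pi.smul_apply, smul_eq_mul, Pi.zero_apply]
    have e1 : ∑ q : {q : Fin r × Fin r // q.1 < q.2},
        (2 * d q.1.1 q.1.2) * (s q.1.1 k * s q.1.2 k)
        = ∑ u, ∑ v, if u < v then 2 * (d u v * (s u k * s v k)) else 0 := by
      rw [aux_sum_subtype_lt (fun u v => (2 * d u v) * (s u k * s v k))]
      refine Finset.sum_congr rfl fun u _ => Finset.sum_congr rfl fun v _ => ?_
      by_cases h : u < v <;> simp [h] <;> ring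
    have e2 : ∑ u, ∑ v, (if u < v then 2 * (d u v * (s u k * s v k)) else 0)
        = (∑ u, ∑ v, d u v * (s u k * s v k)) - ∑ u, d u u * (s u k * s u k) := by
      rw [aux_double_sum_split (fun u v => d u v * (s u k * s v k))
        (fun u v => by rw [hd u v]; ring)]
      ring
    have e3 : ∑ u, d u u * (s u k * s u k) = ∑ u, d u u := by
      refine Finset.sum_congr rfl fun u _ => by rw [aux_sign_sq (hs u) k, mul_one]
    rw [e1, e2, e3, h1 k]
    ring
  have hz := hli g hsum
  constructor
  · intro u v huv
    rcases lt_or_gt_of_ne huv with h | h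
    · have := hz (some ⟨(u, v), h⟩)
      simp only [hg, Option.elim] at this
      linarith
    · have := hz (some ⟨(v, u), h⟩)
      simp only [hg, Option.elim] at this
      rw [hd u v]; linarith
  · have := hz none
    simp only [hg, Option.elim] at this
    linarith

lemma aux_schur_li {s : Fin r → Fin n → ℝ} (hs : ∀ i, IsSignVec (s i))
    (hschur : SchurIndependent s) : LinearIndependent ℝ s := by
  rcases isEmpty_or_nonempty (Fin r) with h | h
  · exact linearIndependent_empty_type
  · obtain ⟨j⟩ := h
    set V : Option {q : Fin r × Fin r // q.1 < q.2} → (Fin n → ℝ) :=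
      fun p => p.elim (fun _ : Fin n => (1 : ℝ)) (fun q k => s q.1.1 k * s q.1.2 k) with hV
    set φ : Fin r → Option {q : Fin r × Fin r // q.1 < q.2} := fun i =>
      if h : i < j then some ⟨(i, j), h⟩ else if h' : j < i then some ⟨(j, i), h'⟩ else none
      with hφ
    have hφinj : Function.Injective φ := by
      intro a b hab
      simp only [hφ] at hab
      split_ifs at hab <;>
        simp_all [Subtype.mk.injEq, Prod.mk.injEq] <;> omega
    have hcomp : LinearIndependent ℝ (V ∘ φ) := hschur.comp φ hφinj
    have heq : (V ∘ φ) = fun i => fun k => s i k * s j k := by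
      funext i
      funext k
      simp only [Function.comp_apply, hφ, hV]
      rcases lt_trichotomy i j with h | h | h
      · simp [h, Option.elim]
      · subst h
        simp [lt_irrefl, Option.elim, (aux_sign_sq (hs i) k).symm]
      · simp [h, not_lt_of_gt h, Option.elim, mul_comm]
    rw [heq] at hcomp
    set L : (Fin n → ℝ) →ₗ[ℝ] (Fin n → ℝ) :=
      { toFun := fun x k => s j k * x k
        map_add' := by intro x y; funext k; simp [mul_add]
        map_smul' := by intro c x; funext k; simp; ring } with hL
    have hLinv : ∀ x, L (L x) = x := by
      intro x; funext k
      simp only [hL, LinearMap.coe_mk, AddHom.coe_mk]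
      rw [← mul_assoc, aux_sign_sq (hs j) k, one_mul]
    have hLker : LinearMap.ker L = ⊥ :=
      LinearMap.ker_eq_bot.mpr (Function.LeftInverse.injective hLinv)
    have := hcomp.map' L hLker
    have heq2 : (L ∘ fun i => fun k => s i k * s j k) = s := by
      funext i
      funext k
      simp only [Function.comp_apply, hL, LinearMap.coe_mk, AddHom.coe_mk]
      rw [← mul_assoc, mul_comm (s j k) (s i k), mul_assoc, aux_sign_sq (hs j) k, mul_one]
    rwa [heq2] at this

lemma aux_exists_dual {s : Fin r → Fin n → ℝ} (hli : LinearIndependent ℝ s) :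
    ∃ w : Fin r → Fin n → ℝ, ∀ i j, s i ⬝ᵥ w j = if j = i then 1 else 0 := by
  set G : Matrix (Fin r) (Fin r) ℝ := Matrix.of fun i j => s i ⬝ᵥ s j with hG
  have hker : ∀ a : Fin r → ℝ, G *ᵥ a = 0 → a = 0 := by
    intro a ha
    set t : Fin n → ℝ := fun k => ∑ i, a i * s i k with ht
    have htt : t ⬝ᵥ t = a ⬝ᵥ (G *ᵥ a) := by
      simp only [ht, dotProduct, Matrix.mulVec, hG, Matrix.of_apply, Finset.sum_mul,
        Finset.mul_sum]
      rw [Finset.sum_comm]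
      refine Finset.sum_congr rfl fun i _ => ?_
      rw [Finset.sum_comm]
      refine Finset.sum_congr rfl fun j _ => Finset.sum_congr rfl fun k _ => by ring
    rw [ha, dotProduct_zero] at htt
    have ht0 : t = 0 := dotProduct_self_eq_zero.mp htt
    have := Fintype.linearIndependent_iff.mp hli a ?_
    · funext i; exact this i
    · funext k
      have := congrFun ht0 k
      simpa [ht, Finset.sum_apply] using this
  have hinj : Function.Injective G.mulVec := by
    intro x y hxy
    have : G *ᵥ (x - y) = 0 := by rw [Matrix.mulVec_sub, hxy, sub_self]
    have := hker _ this
    exact sub_eq_zero.mp this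
  have hunit : IsUnit G := Matrix.mulVec_injective_iff_isUnit.mp hinj
  have hGinv : G⁻¹ * G = 1 := Matrix.nonsing_inv_mul G ((Matrix.isUnit_iff_isUnit_det G).mp hunit)
  refine ⟨fun j k => ∑ t, G⁻¹ j t * s t k, fun i j => ?_⟩
  have : s i ⬝ᵥ (fun k => ∑ t, G⁻¹ j t * s t k) = ∑ t, G⁻¹ j t * (s i ⬝ᵥ s t) := by
    simp only [dotProduct, Finset.mul_sum]
    rw [Finset.sum_comm]
    exact Finset.sum_congr rfl fun t _ => Finset.sum_congr rfl fun k _ => by ring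
  rw [this]
  have : ∑ t, G⁻¹ j t * (s i ⬝ᵥ s t) = (G⁻¹ * G) j i := by
    rw [Matrix.mul_apply]
    exact Finset.sum_congr rfl fun t _ => by rw [hG]; simp [Matrix.mul_apply, dotProduct_comm]
  rw [this, hGinv, Matrix.one_apply]

lemma aux_expand_in_span {s : Fin r → Fin n → ℝ} {w : Fin r → Fin n → ℝ}
    (hw : ∀ i j, s i ⬝ᵥ w j = if j = i then 1 else 0)
    {y : Fin n → ℝ} (hy : y ∈ Submodule.span ℝ (Set.range s)) :
    ∀ k, y k = ∑ i, (w i ⬝ᵥ y) * s i k := by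
  obtain ⟨c, hc⟩ := (Submodule.mem_span_range_iff_exists_fun ℝ).mp hy
  have hyk : ∀ k, y k = ∑ j, c j * s j k := by
    intro k
    rw [← hc]
    simp [Finset.sum_apply]
  have hwy : ∀ i, w i ⬝ᵥ y = c i := by
    intro i
    have h1 : w i ⬝ᵥ y = ∑ j, c j * (s j ⬝ᵥ w i) := by
      simp only [dotProduct, Finset.mul_sum]
      calc ∑ k, w i k * y k
          = ∑ k, ∑ j, c j * (s j k * w i k) := by
            refine Finset.sum_congr rfl fun k _ => ?_
            rw [hyk k, Finset.mul_sum]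
            exact Finset.sum_congr rfl fun j _ => by ring
        _ = ∑ j, ∑ k, c j * (s j k * w i k) := Finset.sum_comm
    rw [h1]
    simp [hw]
  intro k
  rw [hyk k]
  exact Finset.sum_congr rfl fun i _ => by rw [hwy i]


section Aux4

variable {n r : ℕ}

lemma aux_vecMulVec_mulVec (u v x : Fin n → ℝ) :
    vecMulVec u v *ᵥ x = (v ⬝ᵥ x) • u := by
  funext a
  simp only [Matrix.mulVec, dotProduct, vecMulVec_apply, Pi.smul_apply, smul_eq_mul,
    Finset.sum_mul, Finset.mul_sum]
  exact Finset.sum_congr rfl fun b _ => by ring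

lemma aux_mul_vecMulVec (A : Matrix (Fin n) (Fin n) ℝ) (u v : Fin n → ℝ) :
    A * vecMulVec u v = vecMulVec (A *ᵥ u) v := by
  ext a b
  simp only [Matrix.mul_apply, vecMulVec_apply, Matrix.mulVec, dotProduct, Finset.sum_mul]
  exact Finset.sum_congr rfl fun c _ => by ring

lemma aux_smul_posSemidef {a : ℝ} (ha : 0 ≤ a) {X : Matrix (Fin n) (Fin n) ℝ}
    (hX : X.PosSemidef) : (a • X).PosSemidef := by
  refine Matrix.PosSemidef.of_dotProduct_mulVec_nonneg ?_ ?_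
  · have h1 := hX.1
    rw [Matrix.IsHermitian] at h1 ⊢
    rw [Matrix.conjTranspose_smul, h1]
    simp
  · intro x
    rw [Matrix.smul_mulVec, dotProduct_smul, smul_eq_mul]
    exact mul_nonneg ha (hX.dotProduct_mulVec_nonneg x)

lemma aux_posSemidef_vecMulVec {u : Fin n → ℝ} : (vecMulVec u u).PosSemidef := by
  refine Matrix.PosSemidef.of_dotProduct_mulVec_nonneg ?_ ?_
  · rw [Matrix.IsHermitian]
    ext a b
    simp [Matrix.conjTranspose_apply, vecMulVec_apply, mul_comm]
  · intro x
    rw [aux_vecMulVec_mulVec, dotProduct_smul, smul_eq_mul, star_trivial,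
      dotProduct_comm x u]
    exact mul_self_nonneg _

end Aux4

/-- for a Schur independent family `S` of sign vectors with `P` the orthogonal
projector onto `span S`, the linear functional `ψ(X) = n⁻¹ trace(P X)` satisfies `ψ ≤ 1` on
the elliptope, with equality exactly on `conv{s sᵀ : s ∈ S}`; hence `ψ` exposes this face. -/
theorem projector_functional_exposes_face {n r : ℕ}
    (s : Fin r → Fin n → ℝ) (hs : ∀ i, IsSignVec (s i))
    (hschur : SchurIndependent s)
    (P : Matrix (Fin n) (Fin n) ℝ) (hPsymm : P.IsSymm)
    (hPrange : ∀ x : Fin n → ℝ, P.mulVec x ∈ Submodule.span ℝ (Set.range s))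
    (hPfix : ∀ x ∈ Submodule.span ℝ (Set.range s), P.mulVec x = x) :
    (∀ X ∈ elliptope n, (n : ℝ)⁻¹ * (P * X).trace ≤ 1) ∧
      {X ∈ elliptope n | (n : ℝ)⁻¹ * (P * X).trace = 1}
        = convexHull ℝ {M | ∃ i, M = vecMulVec (s i) (s i)} := by
  have hn0 : 0 < n := by
    rcases Nat.eq_zero_or_pos n with h | h
    · exfalso
      subst h
      exact hschur.ne_zero none (funext fun k => k.elim0)
    · exact h
  have hn : (0:ℝ) < n := by exact_mod_cast hn0
  have hPt : Pᵀ = P := hPsymm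
  have hPP : P * P = P := aux_mulVec_ext fun v => by
    rw [← Matrix.mulVec_mulVec]
    exact hPfix _ (hPrange v)
  have hQt : (1 - P)ᵀ = 1 - P := by rw [Matrix.transpose_sub, Matrix.transpose_one, hPt]
  have hQQ : (1 - P) * (1 - P) = 1 - P := by
    calc (1 - P) * (1 - P) = 1 - P - P + P * P := by noncomm_ring
    _ = 1 - P := by rw [hPP]; abel
  have htr : ∀ X : Matrix (Fin n) (Fin n) ℝ, (∀ i, X i i = 1) → X.trace = n := by
    intro X hX
    simp [Matrix.trace, Matrix.diag, hX]
  have hQtr : ∀ X : Matrix (Fin n) (Fin n) ℝ, (∀ i, X i i = 1) →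
      ((1 - P) * X).trace = n - (P * X).trace := by
    intro X hX
    rw [Matrix.sub_mul, Matrix.one_mul, Matrix.trace_sub, htr X hX]
  have part1 : ∀ X ∈ elliptope n, ((n : ℝ))⁻¹ * (P * X).trace ≤ 1 := by
    intro X hX
    obtain ⟨hpsd, hdiag⟩ := hX
    have h0 := (aux_trace_Q_psd hQt hQQ hpsd).1
    rw [hQtr X hdiag] at h0
    have hle : (P * X).trace ≤ n := by linarith
    have h2 := mul_le_mul_of_nonneg_left hle (inv_nonneg.mpr hn.le)
    rwa [inv_mul_cancel₀ hn.ne'] at h2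
  refine ⟨part1, ?_⟩
  have hli := aux_schur_li hs hschur
  obtain ⟨w, hw⟩ := aux_exists_dual hli
  apply Set.Subset.antisymm
  · rintro X ⟨⟨hpsd, hdiag⟩, hpsi⟩
    have htrPX : (P * X).trace = n := by
      have h2 := congrArg (fun t => (n:ℝ) * t) hpsi
      simp only [← mul_assoc, mul_inv_cancel₀ hn.ne', one_mul, mul_one] at h2
      exact h2
    have hQX0 : (1 - P) * X = 0 := by
      apply (aux_trace_Q_psd hQt hQQ hpsd).2
      rw [hQtr X hdiag, htrPX]
      ring
    have hPX : P * X = X := by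
      have h2 : X - P * X = 0 := by
        calc X - P * X = (1 - P) * X := by rw [Matrix.sub_mul, Matrix.one_mul]
        _ = 0 := hQX0
      exact (sub_eq_zero.mp h2).symm
    have hXt : Xᵀ = X := by
      have h2 := hpsd.1
      rwa [Matrix.IsHermitian, Matrix.conjTranspose_eq_transpose_of_trivial] at h2
    have hcol : ∀ v : Fin n → ℝ, X *ᵥ v ∈ Submodule.span ℝ (Set.range s) := by
      intro v
      have h2 : X *ᵥ v = P *ᵥ (X *ᵥ v) := by
        rw [Matrix.mulVec_mulVec, hPX]
      rw [h2]
      exact hPrange _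
    set C : Fin r → Fin r → ℝ := fun i j => w i ⬝ᵥ (X *ᵥ w j) with hC
    have hcolmem : ∀ b : Fin n, (fun a => X a b) ∈ Submodule.span ℝ (Set.range s) := by
      intro b
      have h2 : (fun a => X a b) = X *ᵥ Pi.single b 1 := by
        funext a
        simp [Matrix.mulVec_single]
      rw [h2]
      exact hcol _
    have hXe : ∀ a b, X a b = ∑ i, (w i ⬝ᵥ (fun c => X c b)) * s i a := by
      intro a b
      exact aux_expand_in_span hw (hcolmem b) a
    have hei : ∀ i, (fun b => w i ⬝ᵥ (fun c => X c b)) = X *ᵥ w i := by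
      intro i
      funext b
      simp only [dotProduct, Matrix.mulVec]
      refine Finset.sum_congr rfl fun c _ => ?_
      have h3 : X c b = X b c := by
        conv_lhs => rw [← hXt]
        rw [Matrix.transpose_apply]
      rw [h3]
      ring
    have heis : ∀ i b, w i ⬝ᵥ (fun c => X c b) = ∑ j, C j i * s j b := by
      intro i b
      have h1 : (X *ᵥ w i) b = ∑ j, (w j ⬝ᵥ (X *ᵥ w i)) * s j b :=
        aux_expand_in_span hw (hcol (w i)) b
      rw [congrFun (hei i) b, h1]
    have hXexp : ∀ a b, X a b = ∑ i, ∑ j, C j i * s j b * s i a := by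
      intro a b
      rw [hXe a b]
      refine Finset.sum_congr rfl fun i _ => ?_
      rw [heis i b, Finset.sum_mul]
    have hCs : ∀ u v, C u v = C v u := by
      intro u v
      rw [hC]
      simp only []
      rw [dotProduct_mulVec, ← Matrix.mulVec_transpose, hXt, dotProduct_comm]
    have hdsum : ∀ k, ∑ u, ∑ v, C u v * (s u k * s v k) = 1 := by
      intro k
      have h2 : ∑ i, ∑ j, C j i * s j k * s i k = ∑ u, ∑ v, C u v * (s u k * s v k) := by
        rw [Finset.sum_comm]
        exact Finset.sum_congr rfl fun u _ => Finset.sum_congr rfl fun v _ => by ring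
      calc ∑ u, ∑ v, C u v * (s u k * s v k)
          = ∑ i, ∑ j, C j i * s j k * s i k := h2.symm
        _ = X k k := (hXexp k k).symm
        _ = 1 := hdiag k
    obtain ⟨hoff, htr1⟩ := aux_schur_extract hs hschur C hCs hdsum
    have hCnn : ∀ i, 0 ≤ C i i := by
      intro i
      have h2 := hpsd.dotProduct_mulVec_nonneg (w i)
      simpa [hC, star_trivial] using h2
    have hXsum : X = ∑ i, C i i • vecMulVec (s i) (s i) := by
      ext a b
      have hsingle : ∀ i : Fin r, ∑ j, C j i * s j b * s i a = C i i * s i b * s i a := by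
        intro i
        apply Finset.sum_eq_single i
        · intro j _ hji
          rw [hoff j i hji]
          ring
        · intro h
          exact absurd (Finset.mem_univ i) h
      calc X a b = ∑ i, C i i * (s i a * s i b) := by
            rw [hXexp a b]
            refine Finset.sum_congr rfl fun i _ => ?_
            rw [hsingle i]
            ring
        _ = (∑ i, C i i • vecMulVec (s i) (s i)) a b := by
            rw [Matrix.sum_apply]
            refine Finset.sum_congr rfl fun i _ => ?_
            simp [vecMulVec_apply]
    rw [hXsum]
    have hmem := Finset.centerMass_mem_convexHull (Finset.univ : Finset (Fin r))
      (w := fun i => C i i) (z := fun i => vecMulVec (s i) (s i))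
      (fun i _ => hCnn i) (by rw [htr1]; norm_num)
      (fun i _ => (show vecMulVec (s i) (s i) ∈
        {M : Matrix (Fin n) (Fin n) ℝ | ∃ i', M = vecMulVec (s i') (s i')} from ⟨i, rfl⟩))
    rwa [Finset.centerMass_eq_of_sum_1 _ _ htr1] at hmem
  · apply convexHull_min
    · rintro M ⟨i, rfl⟩
      have hPs : P *ᵥ s i = s i := hPfix _ (Submodule.subset_span (Set.mem_range_self i))
      refine ⟨⟨aux_posSemidef_vecMulVec, fun k => ?_⟩, ?_⟩
      · rw [vecMulVec_apply]
        exact aux_sign_sq (hs i) k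
      · have ht : (P * vecMulVec (s i) (s i)).trace = n := by
          rw [aux_mul_vecMulVec, hPs]
          have h2 : (vecMulVec (s i) (s i)).trace = ∑ k, s i k * s i k := by
            simp [Matrix.trace, Matrix.diag, vecMulVec_apply]
          rw [h2, Finset.sum_congr rfl fun k _ => aux_sign_sq (hs i) k]
          simp
        rw [ht, inv_mul_cancel₀ hn.ne']
    · intro X hX Y hY a b ha hb hab
      obtain ⟨⟨hX1, hX2⟩, hX3⟩ := hX
      obtain ⟨⟨hY1, hY2⟩, hY3⟩ := hY
      refine ⟨⟨(aux_smul_posSemidef ha hX1).add (aux_smul_posSemidef hb hY1), fun i => ?_⟩, ?_⟩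
      · simp only [Matrix.add_apply, Matrix.smul_apply, smul_eq_mul, hX2 i, hY2 i, mul_one]
        exact hab
      · have e : (P * (a • X + b • Y)).trace = a * (P * X).trace + b * (P * Y).trace := by
          rw [Matrix.mul_add, Matrix.trace_add, Matrix.mul_smul, Matrix.mul_smul,
            Matrix.trace_smul, Matrix.trace_smul]
          simp [smul_eq_mul]
        rw [e]
        linear_combination a * hX3 + b * hY3 + hab
end
end

section
/- Let K be a compact convex set in a finite-dimensional real vector space. Every point in the relative interior of K admits a unique representation as a proper convex combination of extreme points of K — meaning that for each x in the relative interior of K there is exactly one finitely supported function w from the extreme points of K to the nonnegative reals, positive on its support, with total sum 1, and Σ_p w(p)·p = x — if and only if K is a simplex, i.e., K is the convex hull of a finite affinely independent set. -/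
noncomputable section

set_option linter.unusedSectionVars false
set_option maxHeartbeats 1000000

namespace UniqueDecompAux

variable {V : Type*} [NormedAddCommGroup V] [NormedSpace ℝ V]

/-- Total mass of a finsupp, as a linear map. -/
def T1 : (V →₀ ℝ) →ₗ[ℝ] ℝ := Finsupp.lsum ℝ fun _ : V => LinearMap.id

/-- Weighted sum of a finsupp, as a linear map. -/
def T2 : (V →₀ ℝ) →ₗ[ℝ] V := Finsupp.lsum ℝ fun p : V => LinearMap.toSpanSingleton ℝ V p

lemma T1_eq (f : V →₀ ℝ) : T1 f = f.sum fun _ c => c := rfl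

lemma T2_eq (f : V →₀ ℝ) : T2 f = f.sum fun p c => c • p := rfl

lemma T1_single (p : V) (a : ℝ) : T1 (Finsupp.single p a) = a := by simp [T1]

lemma T2_single (p : V) (a : ℝ) : T2 (Finsupp.single p a) = a • p := by
  simp [T2, LinearMap.toSpanSingleton_apply]

/-- Stepping from a relative interior point a little towards any point of `K`
stays in the relative interior. -/
lemma step_into_interior {K : Set V} {x y : V}
    (hx : x ∈ intrinsicInterior ℝ K) (hy : y ∈ K) :
    ∃ δ : ℝ, 0 < δ ∧ δ < 1 ∧ (1 - δ) • x + δ • y ∈ intrinsicInterior ℝ K := by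
  obtain ⟨x', hx', hx'x⟩ := mem_intrinsicInterior.1 hx
  have hxS : x ∈ affineSpan ℝ K := hx'x ▸ x'.2
  have hyS : y ∈ affineSpan ℝ K := subset_affineSpan ℝ K hy
  have hmem : ∀ δ : ℝ, (1 - δ) • x + δ • y ∈ affineSpan ℝ K := by
    intro δ
    have h := AffineSubspace.smul_vsub_vadd_mem (affineSpan ℝ K) δ hyS hxS hxS
    have heq : δ • (y -ᵥ x) +ᵥ x = (1 - δ) • x + δ • y := by
      simp [vsub_eq_sub, vadd_eq_add, smul_sub, sub_smul]
      abel
    rwa [heq] at h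
  set g : ℝ → affineSpan ℝ K := fun δ => ⟨(1 - δ) • x + δ • y, hmem δ⟩ with hg
  have hgc : Continuous g := by
    apply Continuous.subtype_mk
    continuity
  have hg0 : g 0 ∈ interior ((↑) ⁻¹' K : Set <| affineSpan ℝ K) := by
    have : g 0 = x' := by
      apply Subtype.ext
      simp [hg, hx'x]
    rwa [this]
  have hU : g ⁻¹' (interior ((↑) ⁻¹' K : Set <| affineSpan ℝ K)) ∈ nhds (0 : ℝ) :=
    hgc.continuousAt.preimage_mem_nhds (isOpen_interior.mem_nhds hg0)
  obtain ⟨ε, hε, hball⟩ := Metric.mem_nhds_iff.1 hU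
  refine ⟨min (ε / 2) (1 / 2), ?_, ?_, ?_⟩
  · positivity
  · exact lt_of_le_of_lt (min_le_right _ _) (by norm_num)
  · have hδ : min (ε / 2) (1 / 2) ∈ Metric.ball (0 : ℝ) ε := by
      rw [Metric.mem_ball, Real.dist_eq, sub_zero, abs_of_pos (by positivity)]
      exact lt_of_le_of_lt (min_le_left _ _) (by linarith)
    exact mem_intrinsicInterior.2 ⟨g _, hball hδ, rfl⟩

/-- Build a finsupp on `V` out of weights indexed by an injective-on-`s` family. -/
lemma aux_finsupp {ι : Type*} (s : Finset ι) (p : ι → V) (hp : Set.InjOn p s) (w : ι → ℝ) :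
    ∃ c : V →₀ ℝ, (∀ i ∈ s, c (p i) = w i) ∧ ↑c.support ⊆ p '' ↑s ∧
      T1 c = ∑ i ∈ s, w i ∧ T2 c = ∑ i ∈ s, w i • p i := by
  classical
  refine ⟨∑ i ∈ s, Finsupp.single (p i) (w i), ?_, ?_, ?_, ?_⟩
  · intro j hj
    rw [Finset.sum_apply']
    rw [Finset.sum_eq_single j]
    · simp
    · intro i hi hij
      rw [Finsupp.single_apply, if_neg]
      exact fun h => hij (hp hi hj h)
    · exact fun h => absurd hj h
  · refine subset_trans (Finset.coe_subset.2 Finsupp.support_finset_sum) ?_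
    intro q hq
    simp only [Finset.coe_biUnion, Set.mem_iUnion] at hq
    obtain ⟨i, hi, hqi⟩ := hq
    have := Finsupp.support_single_subset hqi
    simp only [Finset.mem_singleton] at this
    exact ⟨i, by simpa using hi, this.symm⟩
  · rw [map_sum]; exact Finset.sum_congr rfl fun i _ => T1_single _ _
  · rw [map_sum]; exact Finset.sum_congr rfl fun i _ => T2_single _ _

lemma weights_eq {t : Finset V}
    (hti : AffineIndependent ℝ (Subtype.val : {x : V // x ∈ t} → V))
    {w1 w2 : V → ℝ} (h1 : ∑ q ∈ t, w1 q = ∑ q ∈ t, w2 q)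
    (h : ∑ q ∈ t, w1 q • q = ∑ q ∈ t, w2 q • q) : ∀ q ∈ t, w1 q = w2 q :=
  AffineIndependent.eq_of_sum_eq_sum_subtype hti h1 h

lemma subset_extremePoints_of_affineIndependent {t : Finset V}
    (hti : AffineIndependent ℝ (Subtype.val : {x : V // x ∈ t} → V)) :
    (t : Set V) ⊆ Set.extremePoints ℝ (convexHull ℝ (t : Set V)) := by
  classical
  intro p hp
  rw [Finset.mem_coe] at hp
  refine mem_extremePoints.2 ⟨subset_convexHull ℝ _ (by exact hp), ?_⟩
  intro x1 hx1 x2 hx2 hseg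
  obtain ⟨w1, hw1n, hw1s, hw1c⟩ := (Finset.mem_convexHull).1 hx1
  obtain ⟨w2, hw2n, hw2s, hw2c⟩ := (Finset.mem_convexHull).1 hx2
  rw [Finset.centerMass_eq_of_sum_1 _ _ hw1s] at hw1c
  rw [Finset.centerMass_eq_of_sum_1 _ _ hw2s] at hw2c
  simp only [id] at hw1c hw2c
  obtain ⟨a, b, ha, hb, hab, habp⟩ := hseg
  have hDs : ∑ q ∈ t, (if q = p then (1:ℝ) else 0) • q = p := by
    have he : ∀ q ∈ t, (if q = p then (1:ℝ) else 0) • q = if q = p then q else 0 := by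
      intro q _; split <;> simp
    rw [Finset.sum_congr rfl he, Finset.sum_ite_eq' t p fun q => q, if_pos hp]
  have hWD : ∀ q ∈ t, a * w1 q + b * w2 q = (if q = p then (1:ℝ) else 0) := by
    apply weights_eq hti
    · rw [Finset.sum_add_distrib, ← Finset.mul_sum, ← Finset.mul_sum, hw1s, hw2s,
        Finset.sum_ite_eq' t p (fun _ => (1:ℝ)), if_pos hp]
      linarith
    · rw [hDs, Finset.sum_congr rfl
        (fun q _ => add_smul (a * w1 q) (b * w2 q) q), Finset.sum_add_distrib]
      simp only [mul_smul, ← Finset.smul_sum, hw1c, hw2c]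
      exact habp
  have key : ∀ (w : V → ℝ), (∀ y ∈ t, 0 ≤ w y) → ∑ y ∈ t, w y = 1 →
      (∀ q ∈ t, q ≠ p → w q = 0) → ∑ q ∈ t, w q • q = p := by
    intro w hn hs hz
    have hv : ∀ q ∈ t, w q = (if q = p then (1:ℝ) else 0) := by
      intro q hq
      by_cases hqp : q = p
      · subst hqp
        rw [if_pos rfl, ← hs,
          Finset.sum_eq_single q (fun i hi hiq => hz i hi hiq) (fun h => absurd hq h)]
      · rw [if_neg hqp]; exact hz q hq hqp
    rw [Finset.sum_congr rfl (fun q hq => by rw [hv q hq])]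
    exact hDs
  have hz1 : ∀ q ∈ t, q ≠ p → w1 q = 0 := by
    intro q hq hqp
    have h0 := hWD q hq
    rw [if_neg hqp] at h0
    nlinarith [hw1n q hq, hw2n q hq]
  have hz2 : ∀ q ∈ t, q ≠ p → w2 q = 0 := by
    intro q hq hqp
    have h0 := hWD q hq
    rw [if_neg hqp] at h0
    nlinarith [hw1n q hq, hw2n q hq]
  exact ⟨hw1c ▸ key w1 hw1n hw1s hz1, hw2c ▸ key w2 hw2n hw2s hz2⟩

end UniqueDecompAux

open UniqueDecompAux

/-- every point in the relative interior of a compact convex set `K` has a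
unique representation as a proper convex combination of extreme points of `K` if and only if
`K` is a simplex (the convex hull of a finite affinely independent set). -/
theorem unique_decomposition_all_points_iff_simplex
    {V : Type*} [NormedAddCommGroup V] [NormedSpace ℝ V] [FiniteDimensional ℝ V]
    (K : Set V) (hKcomp : IsCompact K) (hKconv : Convex ℝ K) :
    (∀ x ∈ intrinsicInterior ℝ K, ∃! w : V →₀ ℝ,
        (∀ p, 0 ≤ w p) ∧ ↑w.support ⊆ Set.extremePoints ℝ K ∧
        (w.sum fun _ c => c) = 1 ∧ (w.sum fun p c => c • p) = x)
      ↔ ∃ t : Finset V,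
          AffineIndependent ℝ (Subtype.val : {x : V // x ∈ t} → V) ∧
          K = convexHull ℝ (t : Set V) := by
  classical
  constructor
  · -- unique decomposition → simplex
    intro H
    by_cases hne : K.Nonempty
    swap
    · refine ⟨∅, ?_, ?_⟩
      · have : IsEmpty {x : V // x ∈ (∅ : Finset V)} :=
          ⟨fun x => absurd x.2 (Finset.notMem_empty _)⟩
        exact affineIndependent_of_subsingleton ℝ _
      · rw [Set.not_nonempty_iff_eq_empty] at hne
        simp [hne]
    set E := Set.extremePoints ℝ K with hE
    -- Step 1 : the set of extreme points is affinely independent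
    have hEind : AffineIndependent ℝ ((↑) : E → V) := by
      rw [affineIndependent_iff]
      intro s w hw0 hws i₀ hi₀
      by_contra hwi
      obtain ⟨c, hcval, hcsupp, hc1, hc2⟩ :=
        aux_finsupp s (fun i : E => (i : V)) (Subtype.val_injective.injOn) w
      rw [hw0] at hc1
      rw [hws] at hc2
      -- a relative interior point
      obtain ⟨x₀, hx₀⟩ := hne.intrinsicInterior hKconv
      obtain ⟨w₀, ⟨hw₀n, hw₀s, hw₀1, hw₀x⟩, _⟩ := H x₀ hx₀
      -- the barycenter of the dependent extreme points
      set n := s.card with hn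
      have hnpos : 0 < n := Finset.card_pos.2 ⟨i₀, hi₀⟩
      have hnR : (0:ℝ) < (n:ℝ) := by exact_mod_cast hnpos
      obtain ⟨u, huval, husupp, hu1, hu2⟩ :=
        aux_finsupp s (fun i : E => (i : V)) (Subtype.val_injective.injOn)
          (fun _ => (n:ℝ)⁻¹)
      have hu1' : T1 u = 1 := by
        rw [hu1, Finset.sum_const, nsmul_eq_mul, mul_inv_cancel₀ (ne_of_gt hnR)]
      set y := T2 u with hy
      have hyK : y ∈ K := by
        show T2 u ∈ K
        rw [show T2 u = ∑ i ∈ s, ((n:ℝ))⁻¹ • (i:V) from hu2]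
        refine hKconv.sum_mem (fun i _ => by positivity) ?_ ?_
        · rw [Finset.sum_const, nsmul_eq_mul, mul_inv_cancel₀ (ne_of_gt hnR)]
        · exact fun i _ => extremePoints_subset i.2
      obtain ⟨δ, hδ0, hδ1, hzmem⟩ := step_into_interior hx₀ hyK
      set z := (1 - δ) • x₀ + δ • y with hz
      clear_value z
      set wz : V →₀ ℝ := (1 - δ) • w₀ + δ • u with hwz
      clear_value wz
      have hsuppE : ∀ (f : V →₀ ℝ), ↑f.support ⊆ E → (↑((1-δ) • f).support : Set V) ⊆ E :=
        fun f hf => subset_trans (Finset.coe_subset.2 (Finsupp.support_smul)) hf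
      have hwzsupp : ↑wz.support ⊆ E := by
        rw [hwz]
        refine subset_trans (Finset.coe_subset.2 Finsupp.support_add) ?_
        rw [Finset.coe_union]
        refine Set.union_subset ?_ ?_
        · exact subset_trans (Finset.coe_subset.2 Finsupp.support_smul) hw₀s
        · refine subset_trans (Finset.coe_subset.2 Finsupp.support_smul) ?_
          refine subset_trans husupp ?_
          rintro q ⟨i, _, rfl⟩
          exact i.2
      have hwzval : ∀ p, wz p = (1 - δ) * w₀ p + δ * u p := by
        intro p
        simp [hwz, Finsupp.add_apply, Finsupp.smul_apply, smul_eq_mul]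
      have hwzn : ∀ p, 0 ≤ wz p := by
        intro p
        rw [hwzval]
        have := hw₀n p
        have hup : 0 ≤ u p := by
          by_cases hp : p ∈ u.support
          · obtain ⟨i, hi, rfl⟩ := husupp hp
            rw [huval i (by simpa using hi)]
            positivity
          · rw [Finsupp.notMem_support_iff.1 hp]
        nlinarith
      have hwz1 : T1 wz = 1 := by
        rw [hwz, map_add, map_smul, map_smul, smul_eq_mul, smul_eq_mul,
          show T1 w₀ = 1 from hw₀1, hu1']
        ring
      have hwzx : T2 wz = z := by
        rw [hwz, map_add, map_smul, map_smul,
          show T2 w₀ = x₀ from hw₀x, show T2 u = y from hy.symm, hz]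
      -- lower bound on wz on the support of c
      have hwzlb : ∀ i ∈ s, δ * (n:ℝ)⁻¹ ≤ wz (i : V) := by
        intro i hi
        rw [hwzval, huval i hi]
        have := hw₀n (i : V)
        nlinarith
      -- the perturbation
      set B := ∑ p ∈ c.support, |c p| with hB
      clear_value B
      have hBnonneg : 0 ≤ B := hB ▸ Finset.sum_nonneg fun p _ => abs_nonneg _
      have hBbound : ∀ p, |c p| ≤ B := by
        intro p
        by_cases hp : p ∈ c.support
        · exact hB ▸ Finset.single_le_sum (fun q _ => abs_nonneg (c q)) hp
        · rw [Finsupp.notMem_support_iff.1 hp]; simpa using hBnonneg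
      set ε := (δ * (n:ℝ)⁻¹) / (B + 1) with hε
      clear_value ε
      have hεpos : 0 < ε := by
        rw [hε]
        exact div_pos (by positivity) (by linarith)
      set w2 : V →₀ ℝ := wz + ε • c with hw2
      clear_value w2
      have hw2n : ∀ p, 0 ≤ w2 p := by
        intro p
        have hval : w2 p = wz p + ε * c p := by
          simp [hw2, Finsupp.add_apply, Finsupp.smul_apply, smul_eq_mul]
        rw [hval]
        rcases le_or_gt 0 (c p) with hcp | hcp
        · have := hwzn p
          nlinarith
        · have hpmem : p ∈ c.support := Finsupp.mem_support_iff.2 (ne_of_lt hcp)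
          obtain ⟨i, hi, rfl⟩ := hcsupp hpmem
          have hlb := hwzlb i (by simpa using hi)
          have habs : |c (i : V)| ≤ B := hBbound _
          have h1 : ε * (B + 1) = δ * (n:ℝ)⁻¹ := by
            rw [hε]
            exact div_mul_cancel₀ _ (by linarith)
          have h2 : ε * |c (i : V)| ≤ δ * (n:ℝ)⁻¹ := by
            calc ε * |c (i : V)| ≤ ε * (B + 1) := by nlinarith
            _ = δ * (n:ℝ)⁻¹ := h1
          rw [abs_of_neg hcp] at h2
          linarith
      have hw2supp : ↑w2.support ⊆ E := by
        rw [hw2]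
        refine subset_trans (Finset.coe_subset.2 Finsupp.support_add) ?_
        rw [Finset.coe_union]
        refine Set.union_subset hwzsupp ?_
        refine subset_trans (Finset.coe_subset.2 Finsupp.support_smul) ?_
        refine subset_trans hcsupp ?_
        rintro q ⟨i, _, rfl⟩
        exact i.2
      have hw21 : T1 w2 = 1 := by
        rw [hw2, map_add, map_smul, hc1, hwz1, smul_eq_mul]
        ring
      have hw2x : T2 w2 = z := by
        rw [hw2, map_add, map_smul, hc2, hwzx, smul_zero, add_zero]
      -- uniqueness at z gives a contradiction
      obtain ⟨wu, _, hwuniq⟩ := H z hzmem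
      have he1 : wz = wu := hwuniq wz ⟨hwzn, hwzsupp, hwz1, hwzx⟩
      have he2 : w2 = wu := hwuniq w2 ⟨hw2n, hw2supp, hw21, hw2x⟩
      have : wz = w2 := he1.trans he2.symm
      have hci₀ : c (i₀ : V) = w i₀ := hcval i₀ hi₀
      have : wz (i₀ : V) = wz (i₀ : V) + ε * c (i₀ : V) := by
        conv_lhs => rw [this]
        simp [hw2, Finsupp.add_apply, Finsupp.smul_apply, smul_eq_mul]
      have : ε * c (i₀ : V) = 0 := by linarith
      rw [hci₀] at this
      exact hwi (by
        rcases mul_eq_zero.1 this with h | h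
        · exact absurd h (ne_of_gt hεpos)
        · exact h)
    -- Step 2 : E is finite
    have hEfin : E.Finite := finite_set_of_fin_dim_affineIndependent ℝ hEind
    -- Step 3 : K = convexHull E
    have hKE : K = convexHull ℝ E := by
      have h1 := closure_convexHull_extremePoints hKcomp hKconv
      rw [← hE] at h1
      rw [← h1, (hEfin.isClosed_convexHull (𝕜 := ℝ)).closure_eq]
    refine ⟨hEfin.toFinset, ?_, ?_⟩
    · have hco : ∀ x : {x : V // x ∈ hEfin.toFinset}, x.1 ∈ E := fun x => by
        have := x.2; rwa [Set.Finite.mem_toFinset] at this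
      have : (Subtype.val : {x : V // x ∈ hEfin.toFinset} → V) =
          ((↑) : E → V) ∘ (fun x => ⟨x.1, hco x⟩) := rfl
      rw [this]
      exact hEind.comp_embedding
        ⟨fun x => ⟨x.1, hco x⟩, fun a b hab => by
          apply Subtype.ext
          have := congrArg Subtype.val hab
          simpa using this⟩
    · rw [Set.Finite.coe_toFinset, hKE]
  · -- simplex → unique decomposition
    rintro ⟨t, hti, rfl⟩
    intro x hx
    have hxK : x ∈ convexHull ℝ (t : Set V) := intrinsicInterior_subset hx
    have htE : (t : Set V) ⊆ Set.extremePoints ℝ (convexHull ℝ (t : Set V)) :=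
      subset_extremePoints_of_affineIndependent hti
    have hEt : Set.extremePoints ℝ (convexHull ℝ (t : Set V)) ⊆ (t : Set V) :=
      extremePoints_convexHull_subset
    -- existence
    obtain ⟨w, hwn, hws, hwc⟩ := (Finset.mem_convexHull).1 hxK
    rw [Finset.centerMass_eq_of_sum_1 _ _ hws] at hwc
    simp only [id] at hwc
    obtain ⟨W, hWval, hWsupp, hW1, hW2⟩ := aux_finsupp t (fun q => q) (Set.injOn_id _) w
    simp only [Set.image_id'] at hWsupp
    refine ⟨W, ⟨?_, subset_trans hWsupp htE, ?_, ?_⟩, ?_⟩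
    · intro p
      by_cases hp : p ∈ t
      · rw [hWval p hp]; exact hwn p hp
      · have : p ∉ W.support := fun h => hp (hWsupp h)
        rw [Finsupp.notMem_support_iff.1 this]
    · rw [← T1_eq, hW1, hws]
    · rw [← T2_eq, hW2, hwc]
    -- uniqueness
    · rintro w1 ⟨hw1n, hw1supp, hw1sum, hw1x⟩
      have hWsum : (W.sum fun _ c => c) = 1 := by rw [← T1_eq, hW1, hws]
      have hWx : (W.sum fun p c => c • p) = x := by rw [← T2_eq, hW2, hwc]
      -- both supports are inside t
      have hs1 : w1.support ⊆ t := fun q hq => (subset_trans hw1supp hEt) hq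
      have hsW : W.support ⊆ t := fun q hq => hWsupp hq
      have hsum1 : ∑ q ∈ t, w1 q = ∑ q ∈ t, W q := by
        rw [← Finsupp.sum_of_support_subset w1 hs1 (fun _ c => c) (fun _ _ => rfl),
          ← Finsupp.sum_of_support_subset W hsW (fun _ c => c) (fun _ _ => rfl),
          hw1sum, hWsum]
      have hsum2 : ∑ q ∈ t, w1 q • q = ∑ q ∈ t, W q • q := by
        rw [← Finsupp.sum_of_support_subset w1 hs1 (fun p c => c • p) (fun _ _ => zero_smul ℝ _),
          ← Finsupp.sum_of_support_subset W hsW (fun p c => c • p) (fun _ _ => zero_smul ℝ _),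
          hw1x, hWx]
      have heq := weights_eq hti hsum1 hsum2
      ext q
      by_cases hq : q ∈ t
      · exact heq q hq
      · rw [Finsupp.notMem_support_iff.1 (fun h => hq (hs1 h)),
          Finsupp.notMem_support_iff.1 (fun h => hq (hsW h))]
end
end

section
/- Let K be a compact convex set in a finite-dimensional real vector space and fix a point x ∈ K. Then x admits a unique representation as a proper convex combination of extreme points of K — meaning there is exactly one finitely supported function w from the extreme points of K to the nonnegative reals, positive on its support, with total sum 1, and Σ_p w(p)·p = x — if and only if x is contained in the relative interior of a simplicial face of K. -/
noncomputable section

open Set Finset Module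

universe u

section Helpers

variable {V : Type*} [NormedAddCommGroup V] [NormedSpace ℝ V]

/-- Function-style characterisation of affine independence of a finset. -/
lemma finset_affineIndependent_iff {t : Finset V} :
    AffineIndependent ℝ (Subtype.val : {x : V // x ∈ t} → V) ↔
      ∀ c : V → ℝ, ∑ p ∈ t, c p = 0 → ∑ p ∈ t, c p • p = 0 → ∀ p ∈ t, c p = 0 := by
  classical
  constructor
  · intro h c h0 hv p hp
    have h0' : ∑ i : {x : V // x ∈ t}, c i.val = 0 := by
      rw [Finset.sum_coe_sort t fun p => c p]; exact h0
    have hv' : ∑ i : {x : V // x ∈ t}, c i.val • i.val = (0 : V) := by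
      rw [Finset.sum_coe_sort t fun p => c p • p]; exact hv
    exact affineIndependent_iff.mp h Finset.univ (fun i => c i.val) h0' hv' ⟨p, hp⟩
      (Finset.mem_univ _)
  · intro H
    rw [affineIndependent_iff]
    intro s w hw hwv i hi
    set c : V → ℝ := fun v => if h : v ∈ t then (if ⟨v, h⟩ ∈ s then w ⟨v, h⟩ else 0) else 0 with hc
    have hcoe : ∀ i : {x : V // x ∈ t}, c i.val = if i ∈ s then w i else 0 := by
      intro i; simp only [hc, dif_pos i.prop]
    have h0 : ∑ p ∈ t, c p = 0 := by
      rw [← Finset.sum_coe_sort t fun p => c p]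
      simp_rw [hcoe]
      rw [Finset.sum_ite_mem, Finset.univ_inter]
      exact hw
    have hv : ∑ p ∈ t, c p • p = 0 := by
      rw [← Finset.sum_coe_sort t fun p => c p • p]
      have : ∀ i : {x : V // x ∈ t}, c i.val • i.val = if i ∈ s then w i • i.val else 0 := by
        intro i; rw [hcoe]; split <;> simp
      simp_rw [this]
      rw [Finset.sum_ite_mem, Finset.univ_inter]
      exact hwv
    have := H c h0 hv i.val i.prop
    rwa [hcoe, if_pos hi] at this

/-- Uniqueness of convex coefficients over an affinely independent finset. -/
lemma unique_coeffs {t : Finset V}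
    (ht : AffineIndependent ℝ (Subtype.val : {x : V // x ∈ t} → V))
    (w₁ w₂ : V →₀ ℝ) (hs₁ : w₁.support ⊆ t) (hs₂ : w₂.support ⊆ t)
    (h1 : ∑ p ∈ t, w₁ p = ∑ p ∈ t, w₂ p)
    (h2 : ∑ p ∈ t, w₁ p • p = ∑ p ∈ t, w₂ p • p) : w₁ = w₂ := by
  have key := finset_affineIndependent_iff.mp ht (fun p => w₁ p - w₂ p)
    (by rw [Finset.sum_sub_distrib, h1, sub_self])
    (by simp_rw [sub_smul]; rw [Finset.sum_sub_distrib, h2, sub_self])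
  ext p
  by_cases hp : p ∈ t
  · have h := key p hp; linarith
  · rw [Finsupp.notMem_support_iff.mp (fun h => hp (hs₁ h)),
      Finsupp.notMem_support_iff.mp (fun h => hp (hs₂ h))]

/-- An extreme point of a face is an extreme point of the ambient set. -/
lemma extremePoint_of_face {K F : Set V} (hF : IsFace K F) {p : V}
    (hp : p ∈ Set.extremePoints ℝ F) : p ∈ Set.extremePoints ℝ K := by
  obtain ⟨hpF, hpe⟩ := hp
  refine ⟨hF.1 hpF, fun y hy z hz hseg => ?_⟩
  obtain ⟨a, b, ha, hb, hab, habp⟩ := hseg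
  have hmem : a • y + (1 - a) • z ∈ F := by
    rw [show (1 : ℝ) - a = b by linarith, habp]; exact hpF
  obtain ⟨hyF, hzF⟩ := hF.2.2 y hy z hz a ha (by linarith) hmem
  exact hpe hyF hzF ⟨a, b, ha, hb, hab, habp⟩

/-- A point of a face which is extreme in the ambient set is extreme in the face. -/
lemma extremePoint_of_mem_face {K F : Set V} (hFK : F ⊆ K) {p : V}
    (hpF : p ∈ F) (hp : p ∈ Set.extremePoints ℝ K) : p ∈ Set.extremePoints ℝ F :=
  ⟨hpF, fun y hy z hz hseg => hp.2 (hFK hy) (hFK hz) hseg⟩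

/-- Vertices of an affinely independent finset are extreme points of its convex hull. -/
lemma vertex_mem_extremePoints {t : Finset V}
    (ht : AffineIndependent ℝ (Subtype.val : {x : V // x ∈ t} → V))
    {p : V} (hp : p ∈ t) : p ∈ Set.extremePoints ℝ (convexHull ℝ (t : Set V)) := by
  classical
  refine ⟨subset_convexHull ℝ _ (Finset.mem_coe.mpr hp), fun y hy z hz hseg => ?_⟩
  obtain ⟨a, b, ha, hb, hab, habp⟩ := hseg
  obtain ⟨f, hf0, hf1, hfy⟩ := Finset.mem_convexHull'.mp hy
  obtain ⟨g, hg0, hg1, hgz⟩ := Finset.mem_convexHull'.mp hz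
  have key := finset_affineIndependent_iff.mp ht
    (fun q => a * f q + b * g q - if q = p then 1 else 0)
    (by rw [Finset.sum_sub_distrib, Finset.sum_add_distrib, ← Finset.mul_sum, ← Finset.mul_sum,
          hf1, hg1, Finset.sum_ite_eq' t p (fun _ => (1:ℝ)), if_pos hp]; linarith)
    (by
      simp_rw [sub_smul, add_smul, mul_smul, ite_smul, one_smul, zero_smul]
      rw [Finset.sum_sub_distrib, Finset.sum_add_distrib, ← Finset.smul_sum, ← Finset.smul_sum,
        hfy, hgz, Finset.sum_ite_eq' t p (fun q => q), if_pos hp, habp, sub_self])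
  have hyp : ∀ q ∈ t, q ≠ p → f q = 0 ∧ g q = 0 := by
    intro q hq hqp
    have h := key q hq
    rw [if_neg hqp] at h
    constructor <;> nlinarith [hf0 q hq, hg0 q hq]
  have hfp : f p = 1 := by
    have : ∑ q ∈ t, f q = f p := by
      apply Finset.sum_eq_single_of_mem p hp
      intro q hq hqp; exact (hyp q hq hqp).1
    rw [← this, hf1]
  have hgp : g p = 1 := by
    have : ∑ q ∈ t, g q = g p := by
      apply Finset.sum_eq_single_of_mem p hp
      intro q hq hqp; exact (hyp q hq hqp).2
    rw [← this, hg1]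
  rw [← hfy]
  rw [Finset.sum_eq_single_of_mem p hp (fun q hq hqp => by rw [(hyp q hq hqp).1, zero_smul]),
    hfp, one_smul]

/-- A face absorbs all points of a positive convex combination lying in it. -/
lemma face_absorb {K F : Set V} (hKconv : Convex ℝ K) (hF : IsFace K F) :
    ∀ (s : Finset V), ∀ c : V → ℝ, (∀ p ∈ s, 0 < c p) → ∑ p ∈ s, c p = 1 →
      (↑s ⊆ K) → (∑ p ∈ s, c p • p) ∈ F → ∀ p ∈ s, p ∈ F := by
  classical
  intro s
  induction s using Finset.induction_on with
  | empty => intro c _ hsum _ _ p hp; simp at hsum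
  | @insert a s ha IH =>
    intro c hpos hsum hsub hmem p hp
    rw [Finset.sum_insert ha] at hsum hmem
    set τ := c a with hτ
    have hτ0 : 0 < τ := hpos a (Finset.mem_insert_self a s)
    by_cases hs : s = ∅
    · subst hs
      simp only [Finset.sum_empty, add_zero] at hsum hmem
      have : τ • a = a := by rw [hsum, one_smul]
      rw [this] at hmem
      simp only [Finset.mem_insert, Finset.notMem_empty, or_false] at hp
      subst hp; exact hmem
    · have hsne : s.Nonempty := Finset.nonempty_iff_ne_empty.mpr hs
      have hrest : 0 < ∑ q ∈ s, c q :=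
        Finset.sum_pos (fun q hq => hpos q (Finset.mem_insert_of_mem hq)) hsne
      have hτ1 : τ < 1 := by linarith
      have h1τ : (0:ℝ) < 1 - τ := by linarith
      set y := ∑ q ∈ s, (c q / (1 - τ)) • q with hy
      have hyK : y ∈ K := by
        apply hKconv.sum_mem
        · intro q hq; exact le_of_lt (div_pos (hpos q (Finset.mem_insert_of_mem hq)) h1τ)
        · rw [← Finset.sum_div, div_eq_one_iff_eq (ne_of_gt h1τ)]; linarith
        · intro q hq; exact hsub (Finset.mem_coe.mpr (Finset.mem_insert_of_mem hq))
      have hcombo : τ • a + (1 - τ) • y ∈ F := by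
        have : (1 - τ) • y = ∑ q ∈ s, c q • q := by
          rw [hy, Finset.smul_sum]
          congr 1; ext q
          rw [smul_smul, mul_div_cancel₀ _ (ne_of_gt h1τ)]
        rw [this]; exact hmem
      have haK : a ∈ K := hsub (Finset.mem_coe.mpr (Finset.mem_insert_self a s))
      obtain ⟨haF, hyF⟩ := hF.2.2 a haK y hyK τ hτ0 hτ1 hcombo
      rcases Finset.mem_insert.mp hp with rfl | hps
      · exact haF
      · refine IH (fun q => c q / (1 - τ))
          (fun q hq => div_pos (hpos q (Finset.mem_insert_of_mem hq)) h1τ) ?_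
          (fun q hq => hsub (Finset.mem_coe.mpr (Finset.mem_insert_of_mem hq))) ?_ p hps
        · rw [← Finset.sum_div, div_eq_one_iff_eq (ne_of_gt h1τ)]; linarith
        · rw [← hy]; exact hyF

/-- The affine map `y ↦ x₀ + y` from a submodule into the ambient space. -/
def subAff (W : Submodule ℝ V) (x₀ : V) : W →ᵃ[ℝ] V where
  toFun := fun y => x₀ + (y : V)
  linear := W.subtype
  map_vadd' := fun p v => by
    simp only [vadd_eq_add, Submodule.coe_add, Submodule.coe_subtype]
    abel

lemma subAff_apply (W : Submodule ℝ V) (x₀ : V) (y : W) : subAff W x₀ y = x₀ + (y : V) := rfl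

lemma subAff_injective (W : Submodule ℝ V) (x₀ : V) : Function.Injective (subAff W x₀) :=
  fun a b h => Subtype.ext (by
    have : x₀ + (a : V) = x₀ + (b : V) := h
    exact add_left_cancel this)

lemma subAff_continuous (W : Submodule ℝ V) (x₀ : V) : Continuous (subAff W x₀) :=
  continuous_const.add continuous_subtype_val

/-- Membership in a subsingleton space: every point of a set is extreme. -/
lemma mem_extremePoints_of_subsingleton [Subsingleton V] {K : Set V} {x : V} (hx : x ∈ K) :
    x ∈ Set.extremePoints ℝ K := by
  rw [mem_extremePoints]
  exact ⟨hx, fun y _ z _ _ => ⟨Subsingleton.elim _ _, Subsingleton.elim _ _⟩⟩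

/-- Dimension-reduction step for Minkowski's theorem. -/
lemma mink_reduce {n : ℕ} [FiniteDimensional ℝ V]
    (IH : ∀ (W : Submodule ℝ V), finrank ℝ W ≤ n → ∀ K : Set W, IsCompact K → Convex ℝ K →
      K ⊆ convexHull ℝ (Set.extremePoints ℝ K))
    (hn : finrank ℝ V ≤ n + 1)
    (K : Set V) (hK : IsCompact K) (hc : Convex ℝ K) (hne : affineSpan ℝ K ≠ ⊤) :
    K ⊆ convexHull ℝ (Set.extremePoints ℝ K) := by
  intro x hx
  set W := (affineSpan ℝ K).direction with hWdef
  have hxS : x ∈ affineSpan ℝ K := subset_affineSpan ℝ K hx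
  have hW : W ≠ ⊤ := by
    intro h
    apply hne
    rw [← AffineSubspace.direction_eq_top_iff_of_nonempty ⟨x, hxS⟩]
    exact h
  have hrank : finrank ℝ W ≤ n := by
    have h1 : finrank ℝ W < finrank ℝ V := Submodule.finrank_lt hW
    omega
  set φ := subAff W x with hφ
  set K' : Set W := φ ⁻¹' K with hK'def
  have hK'conv : Convex ℝ K' := hc.affine_preimage φ
  have hK'closed : IsClosed K' := hK.isClosed.preimage (subAff_continuous W x)
  have hK'bdd : Bornology.IsBounded K' := by
    obtain ⟨C, hC⟩ := hK.isBounded.exists_norm_le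
    apply isBounded_iff_forall_norm_le.mpr
    refine ⟨C + ‖x‖, fun y hy => ?_⟩
    have h1 : ‖x + (y : V)‖ ≤ C := hC _ hy
    calc ‖y‖ = ‖(y : V)‖ := rfl
      _ = ‖(x + (y : V)) - x‖ := by congr 1; abel
      _ ≤ ‖x + (y : V)‖ + ‖x‖ := norm_sub_le _ _
      _ ≤ C + ‖x‖ := by linarith
  have hK'comp : IsCompact K' := Metric.isCompact_of_isClosed_isBounded hK'closed hK'bdd
  have himg : φ '' K' = K := by
    apply Set.Subset.antisymm
    · rintro _ ⟨y, hy, rfl⟩; exact hy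
    · intro k hk
      have hkW : k - x ∈ W := by
        have := AffineSubspace.vsub_mem_direction (subset_affineSpan ℝ K hk) hxS
        simpa [vsub_eq_sub] using this
      refine ⟨⟨k - x, hkW⟩, ?_, ?_⟩
      · show φ _ ∈ K
        rw [hφ, subAff_apply]
        simpa using hk
      · rw [hφ, subAff_apply]; simp
  have hext : φ '' (Set.extremePoints ℝ K') ⊆ Set.extremePoints ℝ K := by
    rintro _ ⟨p', hp', rfl⟩
    refine ⟨by rw [← himg]; exact ⟨p', hp'.1, rfl⟩, fun y hy z hz hseg => ?_⟩
    rw [← himg] at hy hz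
    obtain ⟨y', hy', rfl⟩ := hy
    obtain ⟨z', hz', rfl⟩ := hz
    obtain ⟨a, b, ha, hb, hab, hcombo⟩ := hseg
    have hkey : φ (a • y' + b • z') = φ p' := by
      rw [← hcombo, hφ, subAff_apply, subAff_apply, subAff_apply]
      push_cast
      rw [show a • (x + (y' : V)) + b • (x + (z' : V))
          = (a + b) • x + (a • (y' : V) + b • (z' : V)) by module, hab, one_smul]
    have := subAff_injective W x hkey
    have hps : p' ∈ openSegment ℝ y' z' := ⟨a, b, ha, hb, hab, this⟩
    have h1 := hp'.2 hy' hz' hps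
    rw [h1]
  have hx' : (0 : W) ∈ K' := by
    show φ 0 ∈ K
    rw [hφ, subAff_apply]
    simpa using hx
  have := IH W hrank K' hK'comp hK'conv hx'
  have hximg : x ∈ φ '' (convexHull ℝ (Set.extremePoints ℝ K')) :=
    ⟨0, this, by rw [hφ, subAff_apply]; simp⟩
  rw [AffineMap.image_convexHull] at hximg
  exact convexHull_mono hext hximg

/-- Exposed-face step: a non-interior point of a convex body with nonempty interior lies in a
proper exposed face. -/
lemma exposed_step [FiniteDimensional ℝ V] {K : Set V} (hK : IsCompact K) (hc : Convex ℝ K)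
    (hint : (interior K).Nonempty) {p : V} (hp : p ∈ K) (hpi : p ∉ interior K) :
    ∃ F : Set V, IsCompact F ∧ Convex ℝ F ∧ p ∈ F ∧ affineSpan ℝ F ≠ ⊤ ∧
      Set.extremePoints ℝ F ⊆ Set.extremePoints ℝ K := by
  obtain ⟨l, hl⟩ := geometric_hahn_banach_open_point hc.interior isOpen_interior hpi
  obtain ⟨b₀, hb₀⟩ := hint
  have hle : ∀ a ∈ K, l a ≤ l p := by
    intro a ha
    by_contra hlt
    push_neg at hlt
    set D := |l b₀ - l a| + 1 with hD
    have hD0 : (0:ℝ) < D := by positivity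
    set θ := min 1 ((l a - l p) / D) with hθ
    have hθ0 : 0 < θ := lt_min one_pos (div_pos (by linarith) hD0)
    have hθ1 : θ ≤ 1 := min_le_left _ _
    have hmem : (1 - θ) • a + θ • b₀ ∈ interior K :=
      hc.combo_self_interior_mem_interior ha hb₀ (by linarith) hθ0 (by ring)
    have hval : l ((1 - θ) • a + θ • b₀) < l p := hl _ hmem
    rw [map_add, map_smul, map_smul, smul_eq_mul, smul_eq_mul] at hval
    have h1 : θ * D ≤ l a - l p := by
      have := min_le_right 1 ((l a - l p) / D)
      calc θ * D ≤ ((l a - l p) / D) * D := by nlinarith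
        _ = l a - l p := by field_simp
    have h2 : |l b₀ - l a| < D := by rw [hD]; linarith
    have habs : θ * (l b₀ - l a) ≥ -(θ * D) := by nlinarith [abs_le.mp (le_of_lt h2), neg_abs_le (l b₀ - l a)]
    nlinarith
  refine ⟨{y ∈ K | ∀ z ∈ K, l z ≤ l y}, ?_, ?_, ⟨hp, hle⟩, ?_, ?_⟩
  · exact (IsExposed.isCompact (fun _ => ⟨l, rfl⟩) hK)
  · exact (IsExposed.convex (fun _ => ⟨l, rfl⟩) hc)
  · -- proper: b₀'s value is smaller
    intro htop
    have hb₀K : b₀ ∈ K := interior_subset hb₀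
    have hlb₀ : l b₀ < l p := hl _ hb₀
    -- affine span of F is contained in the hyperplane {l · = l p}
    have hsub : {y ∈ K | ∀ z ∈ K, l z ≤ l y} ⊆
        (AffineSubspace.comap (l.toLinearMap.toAffineMap) (AffineSubspace.mk' (l p) ⊥) : Set V) := by
      intro y hy
      have h1 : l y ≤ l p := hle y hy.1
      have h2 : l p ≤ l y := hy.2 p hp
      have : l y = l p := le_antisymm h1 h2
      show l y ∈ AffineSubspace.mk' (l p) (⊥ : Submodule ℝ ℝ)
      rw [AffineSubspace.mem_mk', this]
      simp
    have := affineSpan_le.mpr hsub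
    rw [htop] at this
    have hb₀mem : b₀ ∈ (AffineSubspace.comap (l.toLinearMap.toAffineMap)
        (AffineSubspace.mk' (l p) ⊥) : Set V) := this trivial
    have : l b₀ = l p := by
      have := hb₀mem
      rw [AffineSubspace.mem_coe, AffineSubspace.mem_comap,
        AffineSubspace.mem_mk'] at this
      simpa [vsub_eq_sub, sub_eq_zero] using this
    linarith
  · exact (IsExposed.isExtreme (fun _ => ⟨l, rfl⟩)).extremePoints_subset_extremePoints

/-- A positive convex combination of an affinely independent finset lies in the
intrinsic interior of its convex hull. -/
lemma mem_intrinsicInterior_simplex {t : Finset V}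
    (ht : AffineIndependent ℝ (Subtype.val : {x : V // x ∈ t} → V))
    (w : V → ℝ) (hw : ∀ p ∈ t, 0 < w p) (h1 : ∑ p ∈ t, w p = 1)
    {x : V} (hx : ∑ p ∈ t, w p • p = x) :
    x ∈ intrinsicInterior ℝ (convexHull ℝ (t : Set V)) := by
  classical
  have htne : t.Nonempty := by
    by_contra h
    rw [Finset.not_nonempty_iff_eq_empty] at h
    subst h; simp at h1
  obtain ⟨x₀, hx₀⟩ := htne
  set s : Set V := convexHull ℝ (t : Set V) with hs
  have hx₀t : (x₀ : V) ∈ (t : Set V) := Finset.mem_coe.mpr hx₀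
  have hspan : affineSpan ℝ s = affineSpan ℝ (t : Set V) := affineSpan_convexHull _
  have hx₀S : x₀ ∈ affineSpan ℝ (t : Set V) := subset_affineSpan ℝ _ hx₀t
  set W := (affineSpan ℝ (t : Set V)).direction with hW
  set φ : W →ᵃ[ℝ] V := subAff W x₀ with hφ
  have hφinj : Function.Injective φ := subAff_injective W x₀
  have hmemS : ∀ z : V, z ∈ affineSpan ℝ s ↔ z - x₀ ∈ W := by
    intro z
    rw [hspan]
    constructor
    · intro hz
      have := AffineSubspace.vsub_mem_direction hz hx₀S
      simpa [vsub_eq_sub] using this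
    · intro hz
      have := AffineSubspace.vadd_mem_of_mem_direction hz hx₀S
      simpa [vadd_eq_add, sub_add_cancel] using this
  set pts : {p : V // p ∈ t} → W := fun i =>
    ⟨(i : V) - x₀, by
      have := AffineSubspace.vsub_mem_direction
        (subset_affineSpan ℝ _ (Finset.mem_coe.mpr i.2)) hx₀S
      simpa [vsub_eq_sub] using this⟩ with hpts
  have hcomp : φ ∘ pts = (Subtype.val : {p : V // p ∈ t} → V) := by
    funext i
    simp only [Function.comp_apply, hpts, hφ, subAff_apply]
    abel
  have hindep : AffineIndependent ℝ pts := by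
    apply AffineIndependent.of_comp φ
    rw [hcomp]; exact ht
  have himgpts : φ '' Set.range pts = (t : Set V) := by
    rw [← Set.range_comp, hcomp]
    ext v
    simp
  have hsp : affineSpan ℝ (Set.range pts) = ⊤ := by
    rw [eq_top_iff]
    intro y _
    have hyS : φ y ∈ affineSpan ℝ (t : Set V) := by
      have := AffineSubspace.vadd_mem_of_mem_direction y.2 hx₀S
      simpa [vadd_eq_add, hφ, subAff_apply, add_comm] using this
    rw [← himgpts, ← AffineSubspace.map_span] at hyS
    obtain ⟨z, hz, hzy⟩ := hyS
    rwa [← hφinj hzy]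
  set b : AffineBasis {p : V // p ∈ t} ℝ W := ⟨pts, hindep, hsp⟩ with hb
  have hbcoe : ⇑b = pts := rfl
  -- x belongs to the convex hull and to the affine span
  have hxs : x ∈ s := by
    rw [hs]
    exact Finset.mem_convexHull'.mpr ⟨w, fun p hp => (hw p hp).le, h1, hx⟩
  have hxW : x - x₀ ∈ W := (hmemS x).mp (subset_affineSpan ℝ s hxs)
  set x' : W := ⟨x - x₀, hxW⟩ with hx'
  have hsum1 : ∑ i : {p : V // p ∈ t}, w (i : V) = 1 := by
    rw [Finset.sum_coe_sort t fun p => w p]; exact h1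
  have hxcomb : x' = Finset.univ.affineCombination ℝ pts (fun i => w (i : V)) := by
    apply hφinj
    rw [Finset.map_affineCombination _ _ _ hsum1, hcomp,
      Finset.affineCombination_eq_linear_combination _ _ _ hsum1]
    have : ∑ i : {p : V // p ∈ t}, w (i : V) • (i : V) = ∑ p ∈ t, w p • p :=
      Finset.sum_coe_sort t fun p => w p • p
    rw [this, hx, hφ, subAff_apply]
    simp [x']
  have hx'int : x' ∈ interior (convexHull ℝ (Set.range ⇑b)) := by
    rw [b.interior_convexHull]
    intro i
    rw [hxcomb, ← hbcoe, b.coord_apply_combination_of_mem (Finset.mem_univ i) hsum1]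
    exact hw _ i.2
  -- the homeomorphism between W and the affine span of s
  set S := affineSpan ℝ s with hS
  haveI : Nonempty S := ⟨⟨x₀, hspan ▸ hx₀S⟩⟩
  set h : W ≃ₜ S :=
    { toFun := fun y => ⟨x₀ + (y : V), (hmemS _).mpr (by simpa using y.2)⟩
      invFun := fun z => ⟨(z : V) - x₀, (hmemS _).mp z.2⟩
      left_inv := fun y => Subtype.ext (by simp)
      right_inv := fun z => Subtype.ext (by simp)
      continuous_toFun := Continuous.subtype_mk (continuous_const.add continuous_subtype_val) _
      continuous_invFun :=
        Continuous.subtype_mk (continuous_subtype_val.sub continuous_const) _ } with hh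
  have hpre : h ⁻¹' ((Subtype.val : S → V) ⁻¹' s) = convexHull ℝ (Set.range pts) := by
    have himg : φ '' convexHull ℝ (Set.range pts) = s := by
      rw [AffineMap.image_convexHull, himgpts, hs]
    have : (φ : W → V) ⁻¹' s = convexHull ℝ (Set.range pts) := by
      rw [← himg, Set.preimage_image_eq _ hφinj]
    rw [← this]
    rfl
  rw [mem_intrinsicInterior]
  refine ⟨h x', ?_, by simp [hh, x']⟩
  have : x' ∈ interior (h ⁻¹' ((Subtype.val : S → V) ⁻¹' s)) := by
    rw [hpre, ← hbcoe]; exact hx'int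
  rw [← Homeomorph.preimage_interior] at this
  exact this

end Helpers

section Minkowski

/-- **Minkowski's theorem**, auxiliary version with a rank bound. -/
theorem mink_aux (n : ℕ) :
    ∀ (V : Type u) [NormedAddCommGroup V] [NormedSpace ℝ V] [FiniteDimensional ℝ V],
      finrank ℝ V ≤ n → ∀ K : Set V, IsCompact K → Convex ℝ K →
        K ⊆ convexHull ℝ (Set.extremePoints ℝ K) := by
  induction n with
  | zero =>
    intro V _ _ _ hr K hK hc x hx
    haveI : Subsingleton V := by
      have : finrank ℝ V = 0 := by omega
      exact Module.finrank_zero_iff.mp this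
    exact subset_convexHull ℝ _ (mem_extremePoints_of_subsingleton hx)
  | succ n IH =>
    intro V _ _ _ hr K hK hc x hx
    have IH' : ∀ (W : Submodule ℝ V), finrank ℝ W ≤ n → ∀ K' : Set W, IsCompact K' →
        Convex ℝ K' → K' ⊆ convexHull ℝ (Set.extremePoints ℝ K') := fun W hW => IH W hW
    by_cases hsp : affineSpan ℝ K = ⊤
    · have hint : (interior K).Nonempty := hc.interior_nonempty_iff_affineSpan_eq_top.mpr hsp
      -- a non-interior point lies in a proper exposed face and is handled by reduction
      have boundary : ∀ p ∈ K, p ∉ interior K → p ∈ convexHull ℝ (Set.extremePoints ℝ K) := by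
        intro p hpK hpni
        obtain ⟨F, hFc, hFconv, hpF, hFne, hFext⟩ := exposed_step hK hc hint hpK hpni
        exact convexHull_mono hFext (mink_reduce IH' hr F hFc hFconv hFne hpF)
      by_cases hxi : x ∈ interior K
      · rcases subsingleton_or_nontrivial V with hV | hV
        · exact subset_convexHull ℝ _ (mem_extremePoints_of_subsingleton hx)
        · obtain ⟨d, hd⟩ := exists_ne (0 : V)
          have hdn : (0:ℝ) < ‖d‖ := norm_pos_iff.mpr hd
          set m : ℝ →ᵃ[ℝ] V := AffineMap.lineMap x (x + d) with hm
          have hmr : ∀ r : ℝ, m r = x + r • d := by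
            intro r
            rw [hm, AffineMap.lineMap_apply]
            simp [vsub_eq_sub, vadd_eq_add]
            module
          set T : Set ℝ := m ⁻¹' K with hT
          have hT0 : (0:ℝ) ∈ T := by
            show m 0 ∈ K; rw [hmr]; simpa using hx
          have hTne : T.Nonempty := ⟨0, hT0⟩
          have hmc : Continuous m := hm ▸ AffineMap.lineMap_continuous
          have hTclosed : IsClosed T := hK.isClosed.preimage hmc
          have hTbdd : Bornology.IsBounded T := by
            obtain ⟨C, hC⟩ := hK.isBounded.exists_norm_le
            apply isBounded_iff_forall_norm_le.mpr
            refine ⟨(C + ‖x‖) / ‖d‖, fun r hr => ?_⟩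
            have h1 : ‖x + r • d‖ ≤ C := by rw [← hmr]; exact hC _ hr
            have h2 : ‖r • d‖ ≤ ‖x + r • d‖ + ‖x‖ := by
              calc ‖r • d‖ = ‖(x + r • d) + (-x)‖ := by congr 1; abel
                _ ≤ ‖x + r • d‖ + ‖-x‖ := norm_add_le _ _
                _ = ‖x + r • d‖ + ‖x‖ := by rw [norm_neg]
            rw [norm_smul, Real.norm_eq_abs] at h2
            rw [Real.norm_eq_abs]
            rw [le_div_iff₀ hdn]
            nlinarith
          have hTcomp : IsCompact T := Metric.isCompact_of_isClosed_isBounded hTclosed hTbdd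
          set a := sInf T with ha
          set b := sSup T with hb
          have haT : a ∈ T := hTcomp.sInf_mem hTne
          have hbT : b ∈ T := hTcomp.sSup_mem hTne
          have hbdb : BddBelow T := hTbdd.bddBelow
          have hbda : BddAbove T := hTbdd.bddAbove
          have ha0 : a ≤ 0 := csInf_le hbdb hT0
          have hb0 : 0 ≤ b := le_csSup hbda hT0
          have hpK : x + a • d ∈ K := by rw [← hmr]; exact haT
          have hqK : x + b • d ∈ K := by rw [← hmr]; exact hbT
          have hpni : x + a • d ∉ interior K := by
            intro h
            have hnb : T ∈ nhds a := by
              apply hmc.continuousAt.preimage_mem_nhds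
              rw [hmr]
              exact mem_interior_iff_mem_nhds.mp h
            obtain ⟨ε, hε, hball⟩ := Metric.mem_nhds_iff.mp hnb
            have : a - ε/2 ∈ T := by
              apply hball
              rw [Metric.mem_ball, Real.dist_eq]
              rw [abs_of_nonpos (by linarith)]
              linarith
            have := csInf_le hbdb this
            linarith
          have hqni : x + b • d ∉ interior K := by
            intro h
            have hnb : T ∈ nhds b := by
              apply hmc.continuousAt.preimage_mem_nhds
              rw [hmr]
              exact mem_interior_iff_mem_nhds.mp h
            obtain ⟨ε, hε, hball⟩ := Metric.mem_nhds_iff.mp hnb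
            have : b + ε/2 ∈ T := by
              apply hball
              rw [Metric.mem_ball, Real.dist_eq]
              rw [abs_of_nonneg (by linarith)]
              linarith
            have := le_csSup hbda this
            linarith
          have hab : a < b := by
            rcases lt_or_ge a b with h | h
            · exact h
            · exfalso
              have ha' : a = 0 := le_antisymm ha0 (le_trans hb0 h)
              apply hpni
              rw [ha']
              simpa using hxi
          have hba : (0:ℝ) < b - a := by linarith
          set α := b / (b - a) with hα
          set β := (-a) / (b - a) with hβ
          have hα0 : 0 ≤ α := div_nonneg hb0 hba.le
          have hβ0 : 0 ≤ β := div_nonneg (by linarith) hba.le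
          have hαβ : α + β = 1 := by
            rw [hα, hβ, ← add_div, div_eq_one_iff_eq (ne_of_gt hba)]
            ring
          have hcombo : α • (x + a • d) + β • (x + b • d) = x := by
            have hc2 : α * a + β * b = 0 := by
              rw [hα, hβ]; field_simp; ring
            calc α • (x + a • d) + β • (x + b • d)
                = (α + β) • x + (α * a + β * b) • d := by module
              _ = x := by rw [hαβ, hc2]; simp
          have hp' := boundary _ hpK hpni
          have hq' := boundary _ hqK hqni
          have hseg : x ∈ segment ℝ (x + a • d) (x + b • d) :=
            ⟨α, β, hα0, hβ0, hαβ, hcombo⟩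
          exact (convex_convexHull ℝ _).segment_subset hp' hq' hseg
      · exact boundary x hx hxi
    · exact mink_reduce IH' hr K hK hc hsp hx

/-- **Minkowski's theorem**: a compact convex set in a finite-dimensional normed real vector
space is the convex hull of its extreme points. -/
theorem minkowski {V : Type u} [NormedAddCommGroup V] [NormedSpace ℝ V] [FiniteDimensional ℝ V]
    (K : Set V) (hK : IsCompact K) (hc : Convex ℝ K) :
    K ⊆ convexHull ℝ (Set.extremePoints ℝ K) :=
  mink_aux (finrank ℝ V) V le_rfl K hK hc

end Minkowski

set_option maxHeartbeats 2000000 in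
/-- a point `x` of a compact convex set `K` has a unique representation as a
proper convex combination of extreme points of `K` if and only if `x` lies in the relative
interior of a simplicial face of `K`. -/
theorem unique_decomposition_point_iff_relint_simplicialFace
    {V : Type*} [NormedAddCommGroup V] [NormedSpace ℝ V] [FiniteDimensional ℝ V]
    (K : Set V) (hKcomp : IsCompact K) (hKconv : Convex ℝ K) (x : V) (hx : x ∈ K) :
    (∃! w : V →₀ ℝ,
        (∀ p, 0 ≤ w p) ∧ ↑w.support ⊆ Set.extremePoints ℝ K ∧
        (w.sum fun _ c => c) = 1 ∧ (w.sum fun p c => c • p) = x)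
      ↔ ∃ F, IsSimplicialFace K F ∧ x ∈ intrinsicInterior ℝ F := by
  classical
  constructor
  · rintro ⟨w, ⟨hw0, hwsupp, hw1, hwx⟩, huniq⟩
    set t := w.support with htdef
    have htpos : ∀ p ∈ t, 0 < w p := fun p hp =>
      lt_of_le_of_ne (hw0 p) (Ne.symm (Finsupp.mem_support_iff.mp hp))
    have h1 : ∑ p ∈ t, w p = 1 := by rw [← hw1]; rfl
    have hxc : ∑ p ∈ t, w p • p = x := by rw [← hwx]; rfl
    have htne : t.Nonempty := by
      by_contra h
      rw [Finset.not_nonempty_iff_eq_empty] at h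
      rw [h] at h1; simp at h1
    -- affine independence of the support
    have hindep : AffineIndependent ℝ (Subtype.val : {p : V // p ∈ t} → V) := by
      by_contra hnot
      rw [finset_affineIndependent_iff] at hnot
      push_neg at hnot
      obtain ⟨c, hc0, hcv, p₀, hp₀, hcp₀⟩ := hnot
      set c' : V → ℝ := fun p => if p ∈ t then c p else 0 with hc'
      have hc'p₀ : c' p₀ ≠ 0 := by simp only [hc', if_pos hp₀]; exact hcp₀
      have hc'0 : ∑ p ∈ t, c' p = 0 := by
        rw [← hc0]; apply Finset.sum_congr rfl; intro p hp; simp only [hc', if_pos hp]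
      have hc'v : ∑ p ∈ t, c' p • p = 0 := by
        rw [← hcv]; apply Finset.sum_congr rfl; intro p hp; simp only [hc', if_pos hp]
      set δ := t.inf' htne ⇑w with hδdef
      have hδ : 0 < δ := (Finset.lt_inf'_iff htne).mpr htpos
      set M := t.sup' htne (fun p => |c' p|) with hMdef
      have hM : 0 < M := lt_of_lt_of_le (abs_pos.mpr hc'p₀) (Finset.le_sup' (fun p => |c' p|) hp₀)
      set ε := δ / M with hεdef
      have hε : 0 < ε := div_pos hδ hM
      have hbound : ∀ p ∈ t, |ε * c' p| ≤ w p := by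
        intro p hp
        rw [abs_mul, abs_of_pos hε]
        have hm1 : |c' p| ≤ M := Finset.le_sup' (fun p => |c' p|) hp
        have hm2 : δ ≤ w p := Finset.inf'_le ⇑w hp
        calc ε * |c' p| ≤ ε * M := by nlinarith
          _ = δ := by rw [hεdef]; field_simp
          _ ≤ w p := hm2
      have hvanish : ∀ p : V, (fun p => w p + ε * c' p) p ≠ 0 → p ∈ t := by
        intro p hne
        by_contra hp
        apply hne
        have h1 : w p = 0 := Finsupp.notMem_support_iff.mp hp
        have h2 : c' p = 0 := by simp only [hc', if_neg hp]
        simp [h1, h2]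
      set w₂ : V →₀ ℝ := Finsupp.onFinset t (fun p => w p + ε * c' p) hvanish with hw₂def
      have hw₂app : ∀ p, w₂ p = w p + ε * c' p := fun p => rfl
      have hw₂0 : ∀ p, 0 ≤ w₂ p := by
        intro p
        rw [hw₂app]
        by_cases hp : p ∈ t
        · have h3 := (abs_le.mp (hbound p hp)).1
          linarith
        · have h1 : w p = 0 := Finsupp.notMem_support_iff.mp hp
          have h2 : c' p = 0 := by simp only [hc', if_neg hp]
          simp [h1, h2]
      have hw₂supp : ↑w₂.support ⊆ Set.extremePoints ℝ K := by
        refine subset_trans ?_ hwsupp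
        exact_mod_cast Finset.coe_subset.mpr Finsupp.support_onFinset_subset
      have hw₂sum : (w₂.sum fun _ c => c) = 1 := by
        rw [Finsupp.sum_of_support_subset w₂ Finsupp.support_onFinset_subset _
          (fun _ _ => rfl)]
        simp_rw [hw₂app]
        rw [Finset.sum_add_distrib, h1, ← Finset.mul_sum, hc'0]; ring
      have hw₂x : (w₂.sum fun p c => c • p) = x := by
        rw [Finsupp.sum_of_support_subset w₂ Finsupp.support_onFinset_subset _
          (fun _ _ => by simp)]
        simp_rw [hw₂app, add_smul, mul_smul]
        rw [Finset.sum_add_distrib, hxc, ← Finset.smul_sum, hc'v, smul_zero, add_zero]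
      have heq := huniq w₂ ⟨hw₂0, hw₂supp, hw₂sum, hw₂x⟩
      have : w₂ p₀ = w p₀ := by rw [heq]
      rw [hw₂app] at this
      have : ε * c' p₀ = 0 := by linarith
      rcases mul_eq_zero.mp this with h | h
      · exact absurd h (ne_of_gt hε)
      · exact hc'p₀ h
    -- the face property
    have htK : (t : Set V) ⊆ K := subset_trans hwsupp extremePoints_subset
    have hFK : convexHull ℝ (t : Set V) ⊆ K := convexHull_min htK hKconv
    set δ := t.inf' htne ⇑w with hδdef
    have hδ : 0 < δ := (Finset.lt_inf'_iff htne).mpr htpos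
    have hδ1 : δ ≤ 1 := by
      obtain ⟨p, hp⟩ := htne
      have h2 : w p ≤ 1 := by
        rw [← h1]
        exact Finset.single_le_sum (fun q hq => (htpos q hq).le) hp
      exact le_trans (Finset.inf'_le _ hp) h2
    set σ := δ / 2 with hσdef
    have hσ0 : 0 < σ := by positivity
    have hσ1 : σ < 1 := by rw [hσdef]; linarith
    have hface : IsFace K (convexHull ℝ (t : Set V)) := by
      refine ⟨hFK, convex_convexHull ℝ _, ?_⟩
      intro y hy z hz τ hτ0 hτ1 hmem
      obtain ⟨aw, ha0, ha1, hau⟩ := Finset.mem_convexHull'.mp hmem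
      have hyd := minkowski K hKcomp hKconv hy
      rw [convexHull_eq_union_convexHull_finite_subsets] at hyd
      obtain ⟨Fy, hFysub, hyF⟩ := Set.mem_iUnion₂.mp hyd
      obtain ⟨fb, hfb0, hfb1, hfby⟩ := Finset.mem_convexHull'.mp hyF
      have hzd := minkowski K hKcomp hKconv hz
      rw [convexHull_eq_union_convexHull_finite_subsets] at hzd
      obtain ⟨Fz, hFzsub, hzF⟩ := Set.mem_iUnion₂.mp hzd
      obtain ⟨gb, hgb0, hgb1, hgbz⟩ := Finset.mem_convexHull'.mp hzF
      set U := Fy ∪ Fz ∪ t with hUdef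
      have hUy : Fy ⊆ U := subset_trans Finset.subset_union_left Finset.subset_union_left
      have hUz : Fz ⊆ U := subset_trans Finset.subset_union_right Finset.subset_union_left
      have hUt : t ⊆ U := Finset.subset_union_right
      set fb' : V → ℝ := fun p => if p ∈ Fy then fb p else 0 with hfb'
      set gb' : V → ℝ := fun p => if p ∈ Fz then gb p else 0 with hgb'
      set aw' : V → ℝ := fun p => if p ∈ t then aw p else 0 with haw'
      have hsumf : ∑ p ∈ U, fb' p = 1 := by
        simp only [hfb', Finset.sum_ite_mem, Finset.inter_eq_right.mpr hUy, hfb1]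
      have hsumg : ∑ p ∈ U, gb' p = 1 := by
        simp only [hgb', Finset.sum_ite_mem, Finset.inter_eq_right.mpr hUz, hgb1]
      have hsuma : ∑ p ∈ U, aw' p = 1 := by
        simp only [haw', Finset.sum_ite_mem, Finset.inter_eq_right.mpr hUt, ha1]
      have hsumw : ∑ p ∈ U, w p = 1 := by
        rw [← Finset.sum_subset hUt (fun p _ hp => Finsupp.notMem_support_iff.mp hp)]
        exact h1
      have hvecf : ∑ p ∈ U, fb' p • p = y := by
        simp only [hfb']
        simp_rw [ite_smul, zero_smul]
        rw [Finset.sum_ite_mem, Finset.inter_eq_right.mpr hUy, hfby]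
      have hvecg : ∑ p ∈ U, gb' p • p = z := by
        simp only [hgb']
        simp_rw [ite_smul, zero_smul]
        rw [Finset.sum_ite_mem, Finset.inter_eq_right.mpr hUz, hgbz]
      have hveca : ∑ p ∈ U, aw' p • p = τ • y + (1 - τ) • z := by
        simp only [haw']
        simp_rw [ite_smul, zero_smul]
        rw [Finset.sum_ite_mem, Finset.inter_eq_right.mpr hUt, hau]
      have hvecw : ∑ p ∈ U, w p • p = x := by
        rw [← Finset.sum_subset hUt (fun p _ hp => by
          rw [Finsupp.notMem_support_iff.mp hp, zero_smul])]
        exact hxc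
      have hthird : ∀ p, 0 ≤ w p - σ * aw' p := by
        intro p
        by_cases hp : p ∈ t
        · have haw1 : aw' p ≤ 1 := by
            simp only [haw', if_pos hp, ← ha1]
            exact Finset.single_le_sum (fun q hq => ha0 q hq) hp
          have haw0 : 0 ≤ aw' p := by simp only [haw', if_pos hp]; exact ha0 p hp
          have hwp : δ ≤ w p := Finset.inf'_le ⇑w hp
          nlinarith
        · have h1' : w p = 0 := Finsupp.notMem_support_iff.mp hp
          have h2' : aw' p = 0 := by simp only [haw', if_neg hp]
          simp [h1', h2']
      have hfb'0 : ∀ p, 0 ≤ fb' p := by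
        intro p
        simp only [hfb']
        by_cases hp : p ∈ Fy
        · rw [if_pos hp]; exact hfb0 _ hp
        · rw [if_neg hp]
      have hgb'0 : ∀ p, 0 ≤ gb' p := by
        intro p
        simp only [hgb']
        by_cases hp : p ∈ Fz
        · rw [if_pos hp]; exact hgb0 _ hp
        · rw [if_neg hp]
      have hvan : ∀ p : V,
          (fun p => σ * τ * fb' p + σ * (1 - τ) * gb' p + (w p - σ * aw' p)) p ≠ 0 → p ∈ U := by
        intro p hne
        by_contra hp
        apply hne
        have hpy : p ∉ Fy := fun h => hp (hUy h)
        have hpz : p ∉ Fz := fun h => hp (hUz h)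
        have hpt : p ∉ t := fun h => hp (hUt h)
        have e1 : fb' p = 0 := by simp only [hfb', if_neg hpy]
        have e2 : gb' p = 0 := by simp only [hgb', if_neg hpz]
        have e3 : aw' p = 0 := by simp only [haw', if_neg hpt]
        have e4 : w p = 0 := Finsupp.notMem_support_iff.mp hpt
        simp [e1, e2, e3, e4]
      set Wc : V →₀ ℝ := Finsupp.onFinset U
        (fun p => σ * τ * fb' p + σ * (1 - τ) * gb' p + (w p - σ * aw' p)) hvan with hWcdef
      have hWcapp : ∀ p, Wc p = σ * τ * fb' p + σ * (1 - τ) * gb' p + (w p - σ * aw' p) :=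
        fun p => rfl
      have hWc0 : ∀ p, 0 ≤ Wc p := by
        intro p
        rw [hWcapp]
        have t1 : 0 ≤ σ * τ * fb' p := by
          apply mul_nonneg (mul_nonneg hσ0.le hτ0.le) (hfb'0 p)
        have t2 : 0 ≤ σ * (1 - τ) * gb' p := by
          apply mul_nonneg (mul_nonneg hσ0.le (by linarith)) (hgb'0 p)
        have t3 := hthird p
        linarith
      have hWcsupp : ↑Wc.support ⊆ Set.extremePoints ℝ K := by
        refine subset_trans (Finset.coe_subset.mpr Finsupp.support_onFinset_subset) ?_
        rw [hUdef]
        push_cast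
        apply Set.union_subset (Set.union_subset hFysub hFzsub) hwsupp
      have hWcsum : (Wc.sum fun _ c => c) = 1 := by
        rw [Finsupp.sum_of_support_subset Wc Finsupp.support_onFinset_subset _ (fun _ _ => rfl)]
        simp_rw [hWcapp]
        rw [Finset.sum_add_distrib, Finset.sum_add_distrib, Finset.sum_sub_distrib,
          ← Finset.mul_sum, ← Finset.mul_sum, ← Finset.mul_sum,
          hsumf, hsumg, hsumw, hsuma]
        ring
      have hWcx : (Wc.sum fun p c => c • p) = x := by
        rw [Finsupp.sum_of_support_subset Wc Finsupp.support_onFinset_subset _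
          (fun _ _ => by simp)]
        have hpt : ∀ p ∈ U, Wc p • p = (σ * τ) • (fb' p • p) + (σ * (1 - τ)) • (gb' p • p)
            + (w p • p - σ • (aw' p • p)) := by
          intro p _
          rw [hWcapp]
          module
        rw [Finset.sum_congr rfl hpt, Finset.sum_add_distrib, Finset.sum_add_distrib,
          Finset.sum_sub_distrib, ← Finset.smul_sum, ← Finset.smul_sum, ← Finset.smul_sum,
          hvecf, hvecg, hvecw, hveca]
        module
      have hWceq : Wc = w := huniq Wc ⟨hWc0, hWcsupp, hWcsum, hWcx⟩
      constructor
      · -- y ∈ convexHull ℝ ↑t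
        set Fy' := Fy.filter (fun p => fb p ≠ 0) with hFy'
        have hzero : ∀ p ∈ Fy, p ∉ Fy' → fb p = 0 := by
          intro p hp hnp
          by_contra hfbne
          exact hnp (Finset.mem_filter.mpr ⟨hp, hfbne⟩)
        have hsubt : ∀ p ∈ Fy', p ∈ (t : Set V) := by
          intro p hp
          obtain ⟨hpFy, hpne⟩ := Finset.mem_filter.mp hp
          have hfbp : 0 < fb p := lt_of_le_of_ne (hfb0 p hpFy) (Ne.symm hpne)
          have hfb'p : fb' p = fb p := by simp only [hfb', if_pos hpFy]
          have hWcp : 0 < Wc p := by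
            rw [hWcapp, hfb'p]
            have t2 : 0 ≤ σ * (1 - τ) * gb' p := by
              apply mul_nonneg (mul_nonneg hσ0.le (by linarith)) (hgb'0 p)
            have t3 := hthird p
            nlinarith [mul_pos (mul_pos hσ0 hτ0) hfbp]
          have : w p ≠ 0 := by rw [← hWceq]; exact ne_of_gt hWcp
          exact Finset.mem_coe.mpr (Finsupp.mem_support_iff.mpr this)
        have hsum' : ∑ p ∈ Fy', fb p = 1 := by
          rw [← hfb1]
          exact (Finset.sum_subset (Finset.filter_subset _ _)
            (fun p hp hnp => hzero p hp hnp)).symm ▸ rfl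
        have hvec' : ∑ p ∈ Fy', fb p • p = y := by
          rw [← hfby]
          apply Finset.sum_subset (Finset.filter_subset _ _)
          intro p hp hnp
          rw [hzero p hp hnp, zero_smul]
        have hcm := Finset.centerMass_mem_convexHull Fy'
          (fun i hi => hfb0 i (Finset.filter_subset _ _ hi))
          (by rw [hsum']; norm_num) (fun i hi => hsubt i hi)
        rw [Finset.centerMass_eq_of_sum_1 _ _ hsum'] at hcm
        rwa [hvec'] at hcm
      · -- z ∈ convexHull ℝ ↑t
        set Fz' := Fz.filter (fun p => gb p ≠ 0) with hFz'
        have hzero : ∀ p ∈ Fz, p ∉ Fz' → gb p = 0 := by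
          intro p hp hnp
          by_contra hgbne
          exact hnp (Finset.mem_filter.mpr ⟨hp, hgbne⟩)
        have hsubt : ∀ p ∈ Fz', p ∈ (t : Set V) := by
          intro p hp
          obtain ⟨hpFz, hpne⟩ := Finset.mem_filter.mp hp
          have hgbp : 0 < gb p := lt_of_le_of_ne (hgb0 p hpFz) (Ne.symm hpne)
          have hgb'p : gb' p = gb p := by simp only [hgb', if_pos hpFz]
          have hWcp : 0 < Wc p := by
            rw [hWcapp, hgb'p]
            have t1 : 0 ≤ σ * τ * fb' p := by
              apply mul_nonneg (mul_nonneg hσ0.le hτ0.le) (hfb'0 p)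
            have t3 := hthird p
            nlinarith [mul_pos (mul_pos hσ0 (show (0:ℝ) < 1 - τ by linarith)) hgbp]
          have : w p ≠ 0 := by rw [← hWceq]; exact ne_of_gt hWcp
          exact Finset.mem_coe.mpr (Finsupp.mem_support_iff.mpr this)
        have hsum' : ∑ p ∈ Fz', gb p = 1 := by
          rw [← hgb1]
          exact (Finset.sum_subset (Finset.filter_subset _ _)
            (fun p hp hnp => hzero p hp hnp)).symm ▸ rfl
        have hvec' : ∑ p ∈ Fz', gb p • p = z := by
          rw [← hgbz]
          apply Finset.sum_subset (Finset.filter_subset _ _)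
          intro p hp hnp
          rw [hzero p hp hnp, zero_smul]
        have hcm := Finset.centerMass_mem_convexHull Fz'
          (fun i hi => hgb0 i (Finset.filter_subset _ _ hi))
          (by rw [hsum']; norm_num) (fun i hi => hsubt i hi)
        rw [Finset.centerMass_eq_of_sum_1 _ _ hsum'] at hcm
        rwa [hvec'] at hcm
    exact ⟨convexHull ℝ (t : Set V), ⟨hface, t, hindep, rfl⟩,
      mem_intrinsicInterior_simplex hindep ⇑w htpos h1 hxc⟩
  · rintro ⟨F, ⟨hface, t, hindep, rfl⟩, hxint⟩
    have hxF : x ∈ convexHull ℝ (t : Set V) := intrinsicInterior_subset hxint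
    have htext : ∀ p ∈ t, p ∈ Set.extremePoints ℝ K := fun p hp =>
      extremePoint_of_face hface (vertex_mem_extremePoints hindep hp)
    obtain ⟨aw, ha0, ha1, hax⟩ := Finset.mem_convexHull'.mp hxF
    set aw' : V → ℝ := fun p => if p ∈ t then aw p else 0 with haw'
    have hvan : ∀ p : V, aw' p ≠ 0 → p ∈ t := by
      intro p hne
      by_contra hp
      exact hne (by simp only [haw', if_neg hp])
    set w : V →₀ ℝ := Finsupp.onFinset t aw' hvan with hwdef
    have hwapp : ∀ p, w p = aw' p := fun p => rfl
    have hw0 : ∀ p, 0 ≤ w p := by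
      intro p
      simp only [hwapp, haw']
      by_cases hp : p ∈ t
      · rw [if_pos hp]; exact ha0 p hp
      · rw [if_neg hp]
    have hwsuppt : w.support ⊆ t := Finsupp.support_onFinset_subset
    have hwsupp : ↑w.support ⊆ Set.extremePoints ℝ K :=
      fun p hp => htext p (hwsuppt hp)
    have hwsum_t : ∑ p ∈ t, w p = 1 := by
      rw [← ha1]
      apply Finset.sum_congr rfl
      intro p hp
      simp only [hwapp, haw', if_pos hp]
    have hwvec_t : ∑ p ∈ t, w p • p = x := by
      rw [← hax]
      apply Finset.sum_congr rfl
      intro p hp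
      simp only [hwapp, haw', if_pos hp]
    have hw1 : (w.sum fun _ c => c) = 1 := by
      rw [Finsupp.sum_of_support_subset w hwsuppt _ (fun _ _ => rfl)]
      exact hwsum_t
    have hwx : (w.sum fun p c => c • p) = x := by
      rw [Finsupp.sum_of_support_subset w hwsuppt _ (fun _ _ => by simp)]
      exact hwvec_t
    refine ⟨w, ⟨hw0, hwsupp, hw1, hwx⟩, ?_⟩
    rintro w' ⟨h0', hs', h1', hx'⟩
    set t' := w'.support with ht'def
    have ht'pos : ∀ p ∈ t', 0 < w' p := fun p hp =>
      lt_of_le_of_ne (h0' p) (Ne.symm (Finsupp.mem_support_iff.mp hp))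
    have h1t' : ∑ p ∈ t', w' p = 1 := by rw [← h1']; rfl
    have hxt' : ∑ p ∈ t', w' p • p = x := by rw [← hx']; rfl
    have ht'K : ↑t' ⊆ K := subset_trans hs' extremePoints_subset
    have habs : ∀ p ∈ t', p ∈ convexHull ℝ (t : Set V) := by
      have hmem : (∑ p ∈ t', w' p • p) ∈ convexHull ℝ (t : Set V) := by rw [hxt']; exact hxF
      exact face_absorb hKconv hface t' ⇑w' ht'pos h1t' ht'K hmem
    have ht't : t' ⊆ t := by
      intro p hp
      have hpext : p ∈ Set.extremePoints ℝ (convexHull ℝ (t : Set V)) :=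
        extremePoint_of_mem_face hface.1 (habs p hp) (hs' hp)
      exact Finset.mem_coe.mp (extremePoints_convexHull_subset hpext)
    apply unique_coeffs hindep w' w ht't hwsuppt
    · rw [hwsum_t, ← Finset.sum_subset ht't (fun p _ hp => Finsupp.notMem_support_iff.mp hp)]
      exact h1t'
    · rw [hwvec_t, ← Finset.sum_subset ht't (fun p _ hp => by
        rw [Finsupp.notMem_support_iff.mp hp, zero_smul])]
      exact hxt'

end
end

section
/- Let H = Σ_{i=1}^r τ_i z_i z_i^T with binary vectors z_i ∈ {0,1}^n and coefficients τ_i > 0 summing to 1, and define A = Σ_{i=1}^r τ_i s_i s_i^T where s_i = 2z_i − 𝟙. Let R = I − n^{−1}𝟙𝟙^T be the orthogonal projector onto the orthogonal complement of 𝟙. Then A is the unique symmetric n×n matrix X satisfying diag(X) = 𝟙 and R(4H − X)R = 0. -/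
/-! Write `R = 1 - P` with `P = n⁻¹ 𝟙𝟙ᵀ`. Since `M - RMR = PM + RMP`, the matrices annihilated
by `M ↦ RMR` are exactly those of the form `u𝟙ᵀ + 𝟙vᵀ`. For any vector `z` one has
`4zzᵀ - (2z - 𝟙)(2z - 𝟙)ᵀ = (2z - 𝟙)𝟙ᵀ + 2𝟙zᵀ`, so `R(4H - A)R = 0`, and `A` has unit diagonal
because `(2z_k - 1)² = 1` for binary `z`. If `X` is another solution, `A - X = u𝟙ᵀ + 𝟙vᵀ` is
symmetric with zero diagonal, which forces `v = -u` and then `u` constant, so `A - X = 0`. -/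

open Matrix

noncomputable section

def centering (ι K : Type*) [Fintype ι] [DecidableEq ι] [Field K] : Matrix ι ι K :=
  1 - (Fintype.card ι : K)⁻¹ • vecMulVec (fun _ => 1) (fun _ => 1)

section Centering

variable {ι K : Type*} [Fintype ι] [DecidableEq ι] [Field K]

theorem centering_mulVec_one [CharZero K] :
    centering ι K *ᵥ (fun _ => 1) = 0 := by
  rcases isEmpty_or_nonempty ι with _ | _
  · exact Subsingleton.elim _ _
  ext i
  simp [centering, sub_mulVec, smul_mulVec, vecMulVec_mulVec, dotProduct]

theorem one_vecMul_centering [CharZero K] :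
    (fun _ => 1) ᵥ* centering ι K = 0 := by
  rcases isEmpty_or_nonempty ι with _ | _
  · exact Subsingleton.elim _ _
  ext i
  simp [centering, vecMul_sub, vecMul_smul, vecMul_vecMulVec, dotProduct]

theorem centering_mul_mul_centering_eq_zero_iff [CharZero K] {M : Matrix ι ι K} :
    centering ι K * M * centering ι K = 0 ↔
      ∃ u v : ι → K, M = vecMulVec u (fun _ => 1) + vecMulVec (fun _ => 1) v := by
  set R := centering ι K
  constructor
  · intro h
    set P : Matrix ι ι K := (Fintype.card ι : K)⁻¹ • vecMulVec (fun _ => 1) (fun _ => 1)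
    have hRP : R = 1 - P := rfl
    have hM : M = P * M + R * M * P := by
      calc M = M - R * M * R := by rw [h, sub_zero]
        _ = P * M + R * M * P := by rw [hRP]; noncomm_ring
    refine ⟨(Fintype.card ι : K)⁻¹ • ((R * M) *ᵥ fun _ => 1),
      (Fintype.card ι : K)⁻¹ • ((fun _ => 1) ᵥ* M), ?_⟩
    rw [add_comm]
    refine hM.trans ?_
    simp only [P, smul_mul, Matrix.mul_smul, vecMulVec_mul, mul_vecMulVec, smul_vecMulVec,
      vecMulVec_smul]
  · rintro ⟨u, v, rfl⟩
    rw [mul_add, add_mul, mul_vecMulVec, mul_vecMulVec, vecMulVec_mul, vecMulVec_mul,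
      centering_mulVec_one, one_vecMul_centering]
    simp

end Centering

theorem eq_zero_of_isSymm_of_diag_eq_zero_of_eq_vecMulVec_add
    {ι K : Type*} [CommRing K] [NoZeroDivisors K] [NeZero (2 : K)] {D : Matrix ι ι K}
    (hD : D.IsSymm) (hdiag : ∀ i, D i i = 0) {u v : ι → K}
    (huv : D = vecMulVec u (fun _ => 1) + vecMulVec (fun _ => 1) v) : D = 0 := by
  have hentry : ∀ i j, D i j = u i + v j := fun i j => by simp [huv, vecMulVec_apply]
  have hv : ∀ i, v i = -u i := fun i => by linear_combination hdiag i - hentry i i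
  have hu : ∀ i j, u i = u j := fun i j => by
    have h := hD.apply i j
    rw [hentry, hentry, hv, hv] at h
    have h2 : (2 : K) * (u i - u j) = 0 := by linear_combination -h
    exact sub_eq_zero.1 ((mul_eq_zero.1 h2).resolve_left two_ne_zero)
  ext i j
  rw [hentry, hv, hu i j, add_neg_cancel, Matrix.zero_apply]

theorem four_smul_vecMulVec_self_sub {ι R : Type*} [CommRing R] (x : ι → R) :
    (4 : R) • vecMulVec x x - vecMulVec (fun k => 2 * x k - 1) (fun k => 2 * x k - 1) =
      vecMulVec (fun k => 2 * x k - 1) (fun _ => 1) +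
        vecMulVec (fun _ => 1) (fun k => 2 * x k) := by
  ext i j
  simp only [Matrix.sub_apply, Matrix.add_apply, Matrix.smul_apply, vecMulVec_apply, smul_eq_mul]
  ring

theorem two_mul_sub_one_mul_self_eq_one {R : Type*} [Ring R] {x : R} (hx : x = 0 ∨ x = 1) :
    (2 * x - 1) * (2 * x - 1) = 1 := by
  rcases hx with rfl | rfl <;> norm_num

theorem bcd_reduction_linear_system_general {n r : ℕ}
    (z : Fin r → Fin n → ℝ) (hz : ∀ i k, z i k = 0 ∨ z i k = 1)
    (τ : Fin r → ℝ) (hτsum : ∑ i, τ i = 1)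
    (H A R : Matrix (Fin n) (Fin n) ℝ)
    (hH : H = ∑ i, τ i • vecMulVec (z i) (z i))
    (hA : A = ∑ i, τ i • vecMulVec (fun k => 2 * z i k - 1) (fun k => 2 * z i k - 1))
    (hR : R = 1 - (n : ℝ)⁻¹ • vecMulVec (fun _ => 1) (fun _ => 1)) :
    ((∀ i, A i i = 1) ∧ R * ((4 : ℝ) • H - A) * R = 0) ∧
      ∀ X : Matrix (Fin n) (Fin n) ℝ, X.IsSymm → (∀ i, X i i = 1) →
        R * ((4 : ℝ) • H - X) * R = 0 → X = A := by
  replace hR : R = centering (Fin n) ℝ := by rw [hR, centering, Fintype.card_fin]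
  have hAdiag : ∀ i, A i i = 1 := fun i => by
    simp [hA, Matrix.sum_apply, vecMulVec_apply, two_mul_sub_one_mul_self_eq_one (hz _ i), hτsum]
  have hAsymm : A.IsSymm := IsSymm.ext fun i j => by
    simp only [hA, Matrix.sum_apply, Matrix.smul_apply, vecMulVec_apply, mul_comm]
  have hcentered : R * ((4 : ℝ) • H - A) * R = 0 := by
    have h4HA : (4 : ℝ) • H - A = ∑ t, τ t • ((4 : ℝ) • vecMulVec (z t) (z t) -
        vecMulVec (fun k => 2 * z t k - 1) (fun k => 2 * z t k - 1)) := by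
      simp only [hH, hA, smul_sub, Finset.sum_sub_distrib, Finset.smul_sum, smul_comm (4 : ℝ)]
    rw [h4HA, Finset.mul_sum, Finset.sum_mul]
    refine Finset.sum_eq_zero fun t _ => ?_
    rw [Matrix.mul_smul, smul_mul, hR, centering_mul_mul_centering_eq_zero_iff.2
      ⟨_, _, four_smul_vecMulVec_self_sub (z t)⟩, smul_zero]
  refine ⟨⟨hAdiag, hcentered⟩, fun X hX hXdiag hXR => ?_⟩
  have hdiff : R * (A - X) * R = 0 := by
    rw [← sub_sub_sub_cancel_left X A ((4 : ℝ) • H), mul_sub, sub_mul, hXR, hcentered, sub_self]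
  rw [hR, centering_mul_mul_centering_eq_zero_iff] at hdiff
  obtain ⟨u, v, huv⟩ := hdiff
  refine (sub_eq_zero.1 (eq_zero_of_isSymm_of_diag_eq_zero_of_eq_vecMulVec_add
    (hAsymm.sub hX) (fun i => ?_) huv)).symm
  rw [Matrix.sub_apply, hAdiag, hXdiag, sub_self]

/-- with `H = Σ τ_i z_i z_iᵀ` (binary `z_i`, proper convex coefficients),
`A = Σ τ_i s_i s_iᵀ` where `s_i = 2z_i − 𝟙`, and `R = I − n⁻¹ 𝟙𝟙ᵀ`, the matrix `A` is the
unique symmetric matrix `X` with unit diagonal satisfying `R (4H − X) R = 0`. -/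
theorem bcd_reduction_linear_system {n r : ℕ}
    (z : Fin r → Fin n → ℝ) (hz : ∀ i k, z i k = 0 ∨ z i k = 1)
    (τ : Fin r → ℝ) (hτ : ∀ i, 0 < τ i) (hτsum : ∑ i, τ i = 1)
    (H A R : Matrix (Fin n) (Fin n) ℝ)
    (hH : H = ∑ i, τ i • vecMulVec (z i) (z i))
    (hA : A = ∑ i, τ i • vecMulVec (fun k => 2 * z i k - 1) (fun k => 2 * z i k - 1))
    (hR : R = 1 - (n : ℝ)⁻¹ • vecMulVec (fun _ => 1) (fun _ => 1)) :
    ((∀ i, A i i = 1) ∧ R * ((4 : ℝ) • H - A) * R = 0) ∧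
      ∀ X : Matrix (Fin n) (Fin n) ℝ, X.IsSymm → (∀ i, X i i = 1) →
        R * ((4 : ℝ) • H - X) * R = 0 → X = A :=
  bcd_reduction_linear_system_general z hz τ hτsum H A R hH hA hR
end
end

section
/- Suppose A = Σ_{i=1}^r τ_i s_i s_i^T where {s_1, …, s_r} ⊆ {−1,1}^n is Schur independent and τ_i > 0 sum to 1. If also A = Σ_{j=1}^{r'} τ'_j s'_j s'_j^T where s'_j ∈ {−1,1}^n satisfy s'_j ≠ s'_k and s'_j ≠ −s'_k for j ≠ k, and τ'_j > 0 sum to 1, then r' = r and there exist a permutation π of {1,…,r} and signs ξ_j ∈ {−1,1} such that s'_j = ξ_j s_{π(j)} and τ'_j = τ_{π(j)} for every j. In other words, the sign component decomposition of A is unique up to permutation of terms and sign flips of the components. -/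
open Matrix

noncomputable section

namespace SCDAux

open Finset

lemma swap_sum {r : ℕ} (f : Fin r → Fin r → ℝ) :
    ∑ q ∈ univ.filter (fun q : Fin r × Fin r => q.2 < q.1), f q.1 q.2
      = ∑ q ∈ univ.filter (fun q : Fin r × Fin r => q.1 < q.2), f q.2 q.1 := by
  apply Finset.sum_nbij' (fun q => Prod.swap q) (fun q => Prod.swap q) <;> simp

lemma pair_expand {r : ℕ} (f : Fin r → Fin r → ℝ) (hsym : ∀ i j, f i j = f j i) :
    ∑ i, ∑ j, f i j
      = ∑ i, f i i + ∑ q : {q : Fin r × Fin r // q.1 < q.2}, 2 * f q.1.1 q.1.2 := by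
  have h1 : ∑ q ∈ univ.filter (fun q : Fin r × Fin r => q.1 < q.2), f q.1 q.2
      = ∑ q : {q : Fin r × Fin r // q.1 < q.2}, f q.1.1 q.1.2 :=
    Finset.sum_subtype _ (by simp) _
  have h2 : ∑ i, ∑ j, f i j = ∑ q : Fin r × Fin r, f q.1 q.2 := by
    rw [← Finset.sum_product']; rfl
  rw [h2]
  rw [← Finset.sum_filter_add_sum_filter_not univ (fun q : Fin r × Fin r => q.1 < q.2)]
  have h3 : univ.filter (fun q : Fin r × Fin r => ¬ q.1 < q.2)
      = univ.filter (fun q : Fin r × Fin r => q.1 = q.2)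
        ∪ univ.filter (fun q : Fin r × Fin r => q.2 < q.1) := by
    ext q; simp; omega
  rw [h3, Finset.sum_union]
  · have h4 : ∑ q ∈ univ.filter (fun q : Fin r × Fin r => q.1 = q.2), f q.1 q.2
        = ∑ i, f i i := by
      apply Finset.sum_nbij' (fun q => q.1) (fun i => (i,i)) <;> simp
    have h5 : ∀ q ∈ univ.filter (fun q : Fin r × Fin r => q.1 < q.2), f q.2 q.1 = f q.1 q.2 :=
      fun q _ => hsym _ _
    rw [h4, swap_sum, Finset.sum_congr rfl h5, h1, ← Finset.mul_sum]
    ring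
  · rw [Finset.disjoint_filter]
    rintro ⟨a,b⟩ _ h; simp at h ⊢; omega

lemma sq_eq_of_sign {x : ℝ} (h : x = 1 ∨ x = -1) : x * x = 1 := by
  rcases h with h|h <;> simp [h]

lemma schur_sq {n r : ℕ} (s : Fin r → Fin n → ℝ) (hs : ∀ i, IsSignVec (s i))
    (hschur : SchurIndependent s) (c : Fin r → ℝ) (a : ℝ)
    (h : ∀ k, (∑ i, c i * s i k)^2 = a) :
    ∑ i, (c i)^2 = a ∧ ∀ q : Fin r × Fin r, q.1 < q.2 → c q.1 * c q.2 = 0 := by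
  set g : Option {q : Fin r × Fin r // q.1 < q.2} → ℝ :=
    fun p => p.elim (∑ i, (c i)^2 - a) (fun q => 2 * (c q.1.1 * c q.1.2)) with hg
  have key : ∑ p, g p • (fun p : Option {q : Fin r × Fin r // q.1 < q.2} =>
      p.elim (fun _ : Fin n => (1 : ℝ)) (fun q k => s q.1.1 k * s q.1.2 k)) p = 0 := by
    funext k
    have expand : (∑ i, c i * s i k)^2
        = ∑ i, (c i)^2 + ∑ q : {q : Fin r × Fin r // q.1 < q.2},
            2 * ((c q.1.1 * c q.1.2) * (s q.1.1 k * s q.1.2 k)) := by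
      have := pair_expand (fun i j => (c i * s i k) * (c j * s j k)) (fun i j => by ring)
      rw [sq, Finset.sum_mul_sum, this]
      congr 1
      · apply Finset.sum_congr rfl; intro i _
        show c i * s i k * (c i * s i k) = (c i)^2
        nlinarith [sq_eq_of_sign (hs i k)]
      · apply Finset.sum_congr rfl; intro q _; ring
    have hk := h k
    rw [expand] at hk
    have hswap : ∑ q : {q : Fin r × Fin r // q.1 < q.2},
        2 * (c q.1.1 * c q.1.2) * (s q.1.1 k * s q.1.2 k)
        = ∑ q : {q : Fin r × Fin r // q.1 < q.2},
        2 * ((c q.1.1 * c q.1.2) * (s q.1.1 k * s q.1.2 k)) := by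
      apply Finset.sum_congr rfl; intro q _; ring
    simp only [Finset.sum_apply, Pi.smul_apply, smul_eq_mul, Pi.zero_apply]
    rw [Fintype.sum_option]
    simp only [Option.elim, hg, mul_one]
    rw [hswap]
    linarith
  have hz := Fintype.linearIndependent_iff.mp hschur g key
  constructor
  · have := hz none
    simp [hg] at this; linarith
  · intro q hq
    have := hz (some ⟨q, hq⟩)
    simp [hg] at this
    exact mul_eq_zero.mpr this

lemma quad {n r : ℕ} (τ : Fin r → ℝ) (s : Fin r → Fin n → ℝ) (x : Fin n → ℝ) :
    ∑ i, τ i * (∑ k, s i k * x k)^2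
      = ∑ k, ∑ l, (x k * x l) * (∑ i, τ i * (s i k * s i l)) := by
  have e1 : ∀ i, τ i * (∑ k, s i k * x k)^2
      = ∑ k, ∑ l, τ i * ((s i k * x k) * (s i l * x l)) := by
    intro i; rw [sq, Finset.sum_mul_sum]; simp only [Finset.mul_sum]
  calc ∑ i, τ i * (∑ k, s i k * x k)^2
      = ∑ i, ∑ k, ∑ l, τ i * ((s i k * x k) * (s i l * x l)) :=
        Finset.sum_congr rfl fun i _ => e1 i
    _ = ∑ k, ∑ i, ∑ l, τ i * ((s i k * x k) * (s i l * x l)) := Finset.sum_comm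
    _ = ∑ k, ∑ l, ∑ i, τ i * ((s i k * x k) * (s i l * x l)) :=
        Finset.sum_congr rfl fun k _ => Finset.sum_comm
    _ = ∑ k, ∑ l, (x k * x l) * (∑ i, τ i * (s i k * s i l)) := by
        apply Finset.sum_congr rfl; intro k _
        apply Finset.sum_congr rfl; intro l _
        rw [Finset.mul_sum]
        apply Finset.sum_congr rfl; intro i _
        ring

lemma mem_span_of_decomp {n r r' : ℕ} (s : Fin r → Fin n → ℝ) (τ : Fin r → ℝ)
    (s' : Fin r' → Fin n → ℝ) (τ' : Fin r' → ℝ) (hτ' : ∀ j, 0 < τ' j)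
    (hE : ∀ k l, ∑ i, τ i * (s i k * s i l) = ∑ j, τ' j * (s' j k * s' j l))
    (j : Fin r') : ∃ c : Fin r → ℝ, ∀ k, s' j k = ∑ i, c i * s i k := by
  have hEQ : ∀ x : Fin n → ℝ,
      ∑ i, τ i * (∑ k, s i k * x k)^2 = ∑ j', τ' j' * (∑ k, s' j' k * x k)^2 := by
    intro x
    rw [quad, quad]
    exact Finset.sum_congr rfl fun k _ => Finset.sum_congr rfl fun l _ => by rw [hE]
  set L := WithLp.linearEquiv 2 ℝ (Fin n → ℝ) with hL
  set S : Fin r → EuclideanSpace ℝ (Fin n) := fun i => L.symm (s i) with hS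
  set V : Submodule ℝ (EuclideanSpace ℝ (Fin n)) := Submodule.span ℝ (Set.range S) with hV
  obtain ⟨y, hy, z, hz, hdec⟩ := V.exists_add_mem_mem_orthogonal (L.symm (s' j))
  set zz : Fin n → ℝ := L z with hzz
  have hinner : ∀ w : Fin n → ℝ, (inner ℝ (L.symm w) z : ℝ) = ∑ k, w k * zz k := by
    intro w
    simp [PiLp.inner_apply, RCLike.inner_apply, hzz]
    exact Finset.sum_congr rfl fun k _ => mul_comm _ _
  have hsz : ∀ i, ∑ k, s i k * zz k = 0 := by
    intro i
    rw [← hinner (s i)]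
    exact (Submodule.mem_orthogonal V z).mp hz _ (Submodule.subset_span ⟨i, rfl⟩)
  have hlhs : ∑ i, τ i * (∑ k, s i k * zz k)^2 = 0 := by
    apply Finset.sum_eq_zero; intro i _; rw [hsz i]; ring
  have hrhs := hlhs.symm.trans (hEQ zz)
  have hterm : ∀ j' : Fin r', ∑ k, s' j' k * zz k = 0 := by
    intro j'
    have h0 : ∀ j' ∈ (univ : Finset (Fin r')), τ' j' * (∑ k, s' j' k * zz k)^2 = 0 := by
      rw [← Finset.sum_eq_zero_iff_of_nonneg]
      · exact hrhs.symm
      · intro j' _; exact mul_nonneg (hτ' j').le (sq_nonneg _)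
    have := h0 j' (mem_univ _)
    have hne := (hτ' j').ne'
    have := mul_eq_zero.mp this
    rcases this with h|h
    · exact absurd h hne
    · exact pow_eq_zero_iff (by norm_num) |>.mp h
  have hzzero : z = 0 := by
    have h1 : (inner ℝ (L.symm (s' j)) z : ℝ) = 0 := by rw [hinner]; exact hterm j
    have h2 : (inner ℝ y z : ℝ) = 0 := (Submodule.mem_orthogonal V z).mp hz y hy
    have h3 : (inner ℝ z z : ℝ) = 0 := by
      have : (inner ℝ (y + z) z : ℝ) = inner ℝ y z + inner ℝ z z := inner_add_left _ _ _
      rw [← hdec, h1, h2] at this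
      linarith
    exact inner_self_eq_zero.mp h3
  have hmem : L.symm (s' j) ∈ V := by rw [hdec, hzzero, add_zero]; exact hy
  rw [hV, Submodule.mem_span_range_iff_exists_fun] at hmem
  obtain ⟨c, hc⟩ := hmem
  refine ⟨c, fun k => ?_⟩
  have : L (∑ i, c i • S i) = s' j := by rw [hc]; simp
  rw [map_sum] at this
  simp only [hS, _root_.map_smul, LinearEquiv.apply_symm_apply] at this
  rw [← this]
  simp [Finset.sum_apply]

lemma exists_sign {n r : ℕ} (s : Fin r → Fin n → ℝ) (hs : ∀ i, IsSignVec (s i))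
    (hschur : SchurIndependent s) (t : Fin n → ℝ) (ht : IsSignVec t)
    (c : Fin r → ℝ) (hc : ∀ k, t k = ∑ i, c i * s i k) :
    ∃ (i₀ : Fin r) (e : ℝ), (e = 1 ∨ e = -1) ∧ t = e • s i₀ := by
  obtain ⟨h1, h2⟩ := schur_sq s hs hschur c 1
    (fun k => by rw [← hc]; rcases ht k with h|h <;> simp [h])
  have hex : ∃ i₀, c i₀ ≠ 0 := by
    by_contra h; push_neg at h
    simp only [h] at h1
    norm_num at h1
  obtain ⟨i₀, hi₀⟩ := hex
  have hzero : ∀ i, i ≠ i₀ → c i = 0 := by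
    intro i hi
    rcases lt_or_gt_of_ne hi with h|h
    · exact (mul_eq_zero.mp (h2 (i, i₀) h)).resolve_right hi₀
    · exact (mul_eq_zero.mp (h2 (i₀, i) h)).resolve_left hi₀
  have hsum : ∑ i, (c i)^2 = (c i₀)^2 :=
    Finset.sum_eq_single i₀ (fun i _ hi => by rw [hzero i hi]; ring) (by simp)
  have hone : c i₀ * c i₀ = 1 := by
    have := hsum.symm.trans h1
    nlinarith
  refine ⟨i₀, c i₀, mul_self_eq_one_iff.mp hone, ?_⟩
  funext k
  rw [hc k, Finset.sum_eq_single i₀ (fun i _ hi => by rw [hzero i hi]; ring) (by simp)]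
  simp

end SCDAux

open SCDAux Finset in
/-- the sign component decomposition of a matrix with Schur independent sign
components is unique up to permutation of the terms and sign flips of the components. -/
theorem scd_uniqueness {n r r' : ℕ}
    (s : Fin r → Fin n → ℝ) (hs : ∀ i, IsSignVec (s i))
    (hschur : SchurIndependent s)
    (τ : Fin r → ℝ) (hτ : ∀ i, 0 < τ i) (hτsum : ∑ i, τ i = 1)
    (s' : Fin r' → Fin n → ℝ) (hs' : ∀ j, IsSignVec (s' j))
    (hdist : ∀ j k, j ≠ k → s' j ≠ s' k ∧ s' j ≠ -s' k)
    (τ' : Fin r' → ℝ) (hτ' : ∀ j, 0 < τ' j) (hτ'sum : ∑ j, τ' j = 1)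
    (heq : ∑ i, τ i • vecMulVec (s i) (s i) = ∑ j, τ' j • vecMulVec (s' j) (s' j)) :
    r' = r ∧ ∃ (π : Fin r' ≃ Fin r) (ξ : Fin r' → ℝ),
      (∀ j, ξ j = 1 ∨ ξ j = -1) ∧ ∀ j, s' j = ξ j • s (π j) ∧ τ' j = τ (π j) := by
  -- n = 0 is impossible
  rcases Nat.eq_zero_or_pos n with hn | hn
  · exfalso
    subst hn
    have h0 : ∑ p, (fun p : Option {q : Fin r × Fin r // q.1 < q.2} =>
        p.elim (1 : ℝ) (fun _ => 0)) p • (fun p : Option {q : Fin r × Fin r // q.1 < q.2} =>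
        p.elim (fun _ : Fin 0 => (1 : ℝ)) (fun q k => s q.1.1 k * s q.1.2 k)) p = 0 := by
      funext k; exact k.elim0
    have := Fintype.linearIndependent_iff.mp hschur _ h0 none
    norm_num at this
  obtain l₀ : Fin n := ⟨0, hn⟩
  -- entrywise equality
  have hE : ∀ k l, ∑ i, τ i * (s i k * s i l) = ∑ j, τ' j * (s' j k * s' j l) := by
    intro k l
    have := Matrix.ext_iff.mpr heq k l
    simpa [Matrix.sum_apply, Matrix.vecMulVec_apply, mul_assoc] using this
  -- each s' j is a signed copy of some s i
  have hface : ∀ j, ∃ (i : Fin r) (e : ℝ), (e = 1 ∨ e = -1) ∧ s' j = e • s i := by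
    intro j
    obtain ⟨c, hc⟩ := mem_span_of_decomp s τ s' τ' hτ' hE j
    exact exists_sign s hs hschur (s' j) (hs' j) c hc
  choose π₀ ξ hξ hsξ using hface
  have hπinj : Function.Injective π₀ := by
    intro j j' hjj
    by_contra hne
    have h1 : s' j = (ξ j * ξ j') • s' j' := by
      rw [hsξ j, hjj, hsξ j', smul_smul]
      congr 1
      rcases hξ j' with h|h <;> rw [h] <;> ring
    rcases hξ j with ha|ha <;> rcases hξ j' with hb|hb
    · rw [ha, hb] at h1; norm_num at h1; exact (hdist j j' hne).1 h1
    · rw [ha, hb] at h1; norm_num at h1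
      exact (hdist j j' hne).2 h1
    · rw [ha, hb] at h1; norm_num at h1
      exact (hdist j j' hne).2 h1
    · rw [ha, hb] at h1; norm_num at h1; exact (hdist j j' hne).1 h1
  -- replace s' by s ∘ π₀ in the decomposition
  have hE' : ∀ k l, ∑ i, τ i * (s i k * s i l) = ∑ j, τ' j * (s (π₀ j) k * s (π₀ j) l) := by
    intro k l
    rw [hE k l]
    apply Finset.sum_congr rfl; intro j _
    rw [hsξ j]
    simp only [Pi.smul_apply, smul_eq_mul]
    rcases hξ j with h|h <;> rw [h] <;> ring
  set b : Fin r → ℝ := fun i => ∑ j ∈ univ.filter (fun j => π₀ j = i), τ' j with hb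
  have hfib : ∀ k l, ∑ j, τ' j * (s (π₀ j) k * s (π₀ j) l)
      = ∑ i, b i * (s i k * s i l) := by
    intro k l
    rw [← Finset.sum_fiberwise univ π₀ (fun j => τ' j * (s (π₀ j) k * s (π₀ j) l))]
    apply Finset.sum_congr rfl; intro i _
    rw [hb, Finset.sum_mul]
    apply Finset.sum_congr rfl; intro j hj
    rw [Finset.mem_filter] at hj
    rw [hj.2]
  have hcoef : ∀ i, τ i = b i := by
    intro i
    have hzero : ∀ k l, ∑ i, (τ i - b i) * (s i k * s i l) = 0 := by
      intro k l
      have h1 := (hE' k l).trans (hfib k l)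
      have : ∑ i, (τ i - b i) * (s i k * s i l)
          = ∑ i, τ i * (s i k * s i l) - ∑ i, b i * (s i k * s i l) := by
        rw [← Finset.sum_sub_distrib]
        apply Finset.sum_congr rfl; intro i _; ring
      rw [this, h1, sub_self]
    set d : Fin r → ℝ := fun i => (τ i - b i) * s i l₀ with hd
    have hdz : ∀ k, (∑ i', d i' * s i' k)^2 = 0 := by
      intro k
      have : ∑ i', d i' * s i' k = ∑ i', (τ i' - b i') * (s i' k * s i' l₀) := by
        apply Finset.sum_congr rfl; intro i' _; rw [hd]; ring
      rw [this, hzero k l₀]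
      ring
    obtain ⟨hsq, -⟩ := schur_sq s hs hschur d 0 hdz
    have hdi : d i = 0 := by
      have hle : ∀ i' ∈ (univ : Finset (Fin r)), (0:ℝ) ≤ (d i')^2 := fun i' _ => sq_nonneg _
      have := (Finset.sum_eq_zero_iff_of_nonneg hle).mp hsq i (mem_univ i)
      exact pow_eq_zero_iff (by norm_num) |>.mp this
    rw [hd] at hdi
    simp only at hdi
    rcases mul_eq_zero.mp hdi with h|h
    · linarith [sub_eq_zero.mp h]
    · rcases hs i l₀ with h'|h' <;> rw [h'] at h <;> norm_num at h
  have hπsurj : Function.Surjective π₀ := by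
    intro i
    by_contra hni
    push_neg at hni
    have : b i = 0 := by
      rw [hb]
      apply Finset.sum_eq_zero
      intro j hj
      rw [Finset.mem_filter] at hj
      exact absurd hj.2 (hni j)
    have := hcoef i
    linarith [hτ i]
  have hbij : Function.Bijective π₀ := ⟨hπinj, hπsurj⟩
  have hcard : r' = r := by
    have := Fintype.card_of_bijective hbij
    simpa using this
  refine ⟨hcard, Equiv.ofBijective π₀ hbij, ξ, hξ, fun j => ⟨hsξ j, ?_⟩⟩
  have hfil : univ.filter (fun j' => π₀ j' = π₀ j) = {j} := by
    ext j'
    simp only [Finset.mem_filter, Finset.mem_univ, true_and, Finset.mem_singleton]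
    exact ⟨fun h => hπinj h, fun h => by rw [h]⟩
  have : τ (π₀ j) = τ' j := by
    rw [hcoef (π₀ j), hb]
    simp only [hfil, Finset.sum_singleton]
  rw [show (Equiv.ofBijective π₀ hbij) j = π₀ j from rfl, ← this]
end
end

section
/- Let R = I − n^{−1}𝟙𝟙^T be the orthogonal projector onto the orthogonal complement of 𝟙 in ℝ^n. A symmetric n×n real matrix X satisfies RXR = 0 if and only if X = 𝟙x^T + x𝟙^T for some vector x ∈ ℝ^n. -/
/-!
With `P = vvᵀ/(v ⬝ᵥ v)` and `R = I - P`, every matrix satisfies `X = RXR + (PX + XP - PXP)`.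
For symmetric `X` the bracket equals `v xᵀ + x vᵀ` with `x = Xv/(v ⬝ᵥ v) - (vᵀXv)/(2(v ⬝ᵥ v)²) v`,
so `RXR = 0` forces this shape; conversely `R` annihilates `v` from both sides.
The theorem is the case `v = 𝟙`, where `v ⬝ᵥ v = n`.
-/

open Matrix

section

variable {ι K : Type*} [Fintype ι] [DecidableEq ι] [Field K]

def orthComplProj (v : ι → K) : Matrix ι ι K := 1 - (v ⬝ᵥ v)⁻¹ • vecMulVec v v

theorem orthComplProj_mulVec_self {v : ι → K} (hv : v ⬝ᵥ v ≠ 0) :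
    orthComplProj v *ᵥ v = 0 := by
  simp [orthComplProj, sub_mulVec, smul_mulVec, vecMulVec_mulVec, hv]

theorem vecMul_orthComplProj_self {v : ι → K} (hv : v ⬝ᵥ v ≠ 0) :
    v ᵥ* orthComplProj v = 0 := by
  simp [orthComplProj, vecMul_sub, vecMul_smul, vecMul_vecMulVec, hv]

theorem Matrix.IsSymm.exists_eq_conj_orthComplProj_add [NeZero (2 : K)] {X : Matrix ι ι K}
    (hX : X.IsSymm) (v : ι → K) :
    ∃ x, X = orthComplProj v * X * orthComplProj v + vecMulVec v x + vecMulVec x v := by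
  set a := (v ⬝ᵥ v)⁻¹
  set P := a • vecMulVec v v
  have hvX : v ᵥ* X = X *ᵥ v := by rw [← mulVec_transpose, hX.eq]
  have hPX : P * X = a • vecMulVec v (X *ᵥ v) := by
    rw [smul_mul, vecMulVec_mul, hvX]
  have hXP : X * P = a • vecMulVec (X *ᵥ v) v := by
    rw [Matrix.mul_smul, mul_vecMulVec]
  have hPXP : P * X * P = (a ^ 2 * (v ⬝ᵥ X *ᵥ v)) • vecMulVec v v := by
    rw [hPX, smul_mul, vecMulVec_mul, vecMul_smul, vecMul_vecMulVec, dotProduct_comm]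
    simp only [smul_smul, vecMulVec_smul]
    ring_nf
  have hconj : orthComplProj v * X * orthComplProj v = X - P * X - X * P + P * X * P := by
    change (1 - P) * X * (1 - P) = _
    noncomm_ring
  refine ⟨a • X *ᵥ v - (a ^ 2 * (v ⬝ᵥ X *ᵥ v) / 2) • v, ?_⟩
  rw [hconj, hPXP, hPX, hXP, vecMulVec_sub, sub_vecMulVec]
  simp only [vecMulVec_smul, smul_vecMulVec]
  match_scalars <;> field_simp <;> ring

theorem conj_orthComplProj_eq_zero_iff [NeZero (2 : K)] {v : ι → K} (hv : v ⬝ᵥ v ≠ 0)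
    {X : Matrix ι ι K} (hX : X.IsSymm) :
    orthComplProj v * X * orthComplProj v = 0 ↔ ∃ x, X = vecMulVec v x + vecMulVec x v := by
  constructor
  · intro h
    obtain ⟨x, hx⟩ := hX.exists_eq_conj_orthComplProj_add v
    exact ⟨x, by rwa [h, zero_add] at hx⟩
  · rintro ⟨x, rfl⟩
    rw [Matrix.mul_add, Matrix.add_mul, Matrix.mul_assoc _ (vecMulVec x v), vecMulVec_mul x v,
      vecMul_orthComplProj_self hv, mul_vecMulVec, orthComplProj_mulVec_self hv]
    simp

end

/-- with `R = I − n⁻¹ 𝟙𝟙ᵀ` the orthogonal projector onto `𝟙^⊥`, a symmetric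
matrix `X` satisfies `R X R = 0` if and only if `X = 𝟙xᵀ + x𝟙ᵀ` for some vector `x`. -/
theorem kernel_of_conjugation_by_R {n : ℕ}
    (X : Matrix (Fin n) (Fin n) ℝ) (hX : X.IsSymm)
    (R : Matrix (Fin n) (Fin n) ℝ)
    (hR : R = 1 - (n : ℝ)⁻¹ • vecMulVec (fun _ => 1) (fun _ => 1)) :
    R * X * R = 0 ↔
      ∃ x : Fin n → ℝ, X = vecMulVec (fun _ => 1) x + vecMulVec x (fun _ => 1) := by
  rcases Nat.eq_zero_or_pos n with rfl | hn
  · exact iff_of_true (Subsingleton.elim _ _) ⟨0, Subsingleton.elim _ _⟩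
  have hone : (fun _ => 1 : Fin n → ℝ) ⬝ᵥ (fun _ => 1) = n := by simp [dotProduct]
  rw [hR, ← hone]
  exact conj_orthComplProj_eq_zero_iff (by rw [hone]; positivity) hX
end
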